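/- arXiv:2510.00901 — 8 statements merged into one kernel-verified Lean document; each statement's English description precedes it below -/
import Mathlib

section
/- Let R be a ring with identity, a ∈ R and j ∈ J(R). (i) If x is a {2}-inverse of a, then 1 + x·j is a unit of R and (1 + x·j)⁻¹·x is a {2}-inverse of a + j. (ii) The map φ(x) = (1 + x·j)⁻¹·x is a bijection from the set of all {2}-inverses of a onto the set of all {2}-inverses of a + j, and its inverse map is given by φ⁻¹(y) = (1 − y·j)⁻¹·y (where 1 − y·j is a unit for every {2}-inverse y of a + j). -/
private theorem ring_inverse_of {R : Type*} [Ring R] {u v : R}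
    (h1 : u * v = 1) (h2 : v * u = 1) : Ring.inverse u = v := by
  have := Ring.inverse_unit (⟨u, v, h1, h2⟩ : Rˣ)
  simpa using this

private theorem jac_left_inv {R : Type*} [Ring R] {k : R}
    (hk : k ∈ Ideal.jacobson (⊥ : Ideal R)) : ∃ z : R, z * (1 + k) = 1 := by
  obtain ⟨z, hz⟩ := Ideal.mem_jacobson_iff.mp hk 1
  rw [Ideal.mem_bot, sub_eq_zero] at hz
  refine ⟨z, ?_⟩
  calc z * (1 + k) = z * 1 * k + z := by noncomm_ring
    _ = 1 := hz

private theorem jac_isUnit {R : Type*} [Ring R] {k : R}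
    (hk : k ∈ Ideal.jacobson (⊥ : Ideal R)) : IsUnit (1 + k) := by
  obtain ⟨z, hz⟩ := jac_left_inv hk
  have hzk : z + z * k = 1 := by rw [← hz]; noncomm_ring
  have hz' : 1 + -(z * k) = z := by
    rw [← sub_eq_add_neg, sub_eq_iff_eq_add']
    rw [eq_comm, ← sub_eq_iff_eq_add'] at hzk
    rw [← hzk]; noncomm_ring
  have hm : -(z * k) ∈ Ideal.jacobson (⊥ : Ideal R) :=
    neg_mem (Ideal.mul_mem_left _ z hk)
  obtain ⟨w, hw⟩ := jac_left_inv hm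
  rw [hz'] at hw
  have hwk : w = 1 + k := by
    calc w = w * (z * (1 + k)) := by rw [hz, mul_one]
      _ = (w * z) * (1 + k) := by rw [mul_assoc]
      _ = 1 + k := by rw [hw, one_mul]
  exact ⟨⟨1 + k, z, by rw [← hwk]; exact hw, hz⟩, rfl⟩

private theorem key_lemma {R : Type*} [Ring R] (a j x : R)
    (hj : j ∈ Ideal.jacobson (⊥ : Ideal R)) (hx : x * a * x = x) :
    IsUnit (1 + x * j) ∧
    (Ring.inverse (1 + x * j) * x) * (a + j) * (Ring.inverse (1 + x * j) * x)
      = Ring.inverse (1 + x * j) * x := by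
  have hm : x * j ∈ Ideal.jacobson (⊥ : Ideal R) := Ideal.mul_mem_left _ x hj
  have hu : IsUnit (1 + x * j) := jac_isUnit hm
  set ui := Ring.inverse (1 + x * j) with hui
  have h1 : (1 + x * j) * ui = 1 := Ring.mul_inverse_cancel _ hu
  have h2 : ui * (1 + x * j) = 1 := Ring.inverse_mul_cancel _ hu
  refine ⟨hu, ?_⟩
  have e1 : ui = 1 - x * j * ui := by
    rw [eq_sub_iff_add_eq, ← h1]; noncomm_ring
  have e3 : ui * x = x - x * j * (ui * x) := by
    calc ui * x = (1 - x * j * ui) * x := by rw [← e1]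
      _ = x - x * j * (ui * x) := by noncomm_ring
  have e2 : x * a * ui = x * a - x * j * ui := by
    calc x * a * ui = x * a * (1 - x * j * ui) := by rw [← e1]
      _ = x * a - (x * a * x) * (j * ui) := by noncomm_ring
      _ = x * a - x * j * ui := by rw [hx]; noncomm_ring
  have e4 : x * a * (ui * x) = ui * x := by
    calc x * a * (ui * x) = (x * a * ui) * x := by noncomm_ring
      _ = (x * a - x * j * ui) * x := by rw [e2]
      _ = x * a * x - x * j * (ui * x) := by noncomm_ring
      _ = x - x * j * (ui * x) := by rw [hx]
      _ = ui * x := e3.symm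
  calc (ui * x) * (a + j) * (ui * x)
      = ui * (x * a * (ui * x) + (x * j) * (ui * x)) := by noncomm_ring
    _ = ui * (ui * x + (x * j) * (ui * x)) := by rw [e4]
    _ = ui * ((1 + x * j) * (ui * x)) := by noncomm_ring
    _ = (ui * (1 + x * j)) * (ui * x) := by rw [mul_assoc]
    _ = ui * x := by rw [h2, one_mul]

/-- For `a ∈ R` and `j` in the Jacobson radical of `R`:
(i) if `x` is a {2}-inverse of `a`, then `1 + x*j` is a unit and `(1 + x*j)⁻¹ * x`
is a {2}-inverse of `a + j`;
(ii) `φ(x) = (1 + x*j)⁻¹ * x` is a bijection from the set of {2}-inverses of `a`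
onto the set of {2}-inverses of `a + j`, with inverse `φ⁻¹(y) = (1 - y*j)⁻¹ * y`
(and `1 - y*j` is a unit for every {2}-inverse `y` of `a + j`). -/
theorem stmt0 {R : Type*} [Ring R] (a j : R)
    (hj : j ∈ Ideal.jacobson (⊥ : Ideal R)) :
    (∀ x : R, x * a * x = x →
      IsUnit (1 + x * j) ∧
      (Ring.inverse (1 + x * j) * x) * (a + j) * (Ring.inverse (1 + x * j) * x)
        = Ring.inverse (1 + x * j) * x) ∧
    Set.BijOn (fun x : R => Ring.inverse (1 + x * j) * x)
      {x : R | x * a * x = x} {y : R | y * (a + j) * y = y} ∧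
    (∀ y : R, y * (a + j) * y = y → IsUnit (1 - y * j)) ∧
    Set.InvOn (fun y : R => Ring.inverse (1 - y * j) * y)
      (fun x : R => Ring.inverse (1 + x * j) * x)
      {x : R | x * a * x = x} {y : R | y * (a + j) * y = y} := by
  have hj' : -j ∈ Ideal.jacobson (⊥ : Ideal R) := neg_mem hj
  -- reversed key lemma: for y a {2}-inverse of a + j
  have key2 : ∀ y : R, y * (a + j) * y = y →
      IsUnit (1 - y * j) ∧
      (Ring.inverse (1 - y * j) * y) * a * (Ring.inverse (1 - y * j) * y)
        = Ring.inverse (1 - y * j) * y := by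
    intro y hy
    have := key_lemma (a + j) (-j) y hj' hy
    simpa [mul_neg, sub_eq_add_neg] using this
  have part1 : ∀ x : R, x * a * x = x →
      IsUnit (1 + x * j) ∧
      (Ring.inverse (1 + x * j) * x) * (a + j) * (Ring.inverse (1 + x * j) * x)
        = Ring.inverse (1 + x * j) * x := fun x hx => key_lemma a j x hj hx
  -- ψ(φ(x)) = x
  have left : ∀ x ∈ {x : R | x * a * x = x},
      (fun y : R => Ring.inverse (1 - y * j) * y)
        ((fun x : R => Ring.inverse (1 + x * j) * x) x) = x := by
    intro x hx
    obtain ⟨hu, -⟩ := part1 x hx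
    set ui := Ring.inverse (1 + x * j) with hui
    have h1 : (1 + x * j) * ui = 1 := Ring.mul_inverse_cancel _ hu
    have h2 : ui * (1 + x * j) = 1 := Ring.inverse_mul_cancel _ hu
    have hv : 1 - (ui * x) * j = ui := by
      calc 1 - (ui * x) * j = ui * (1 + x * j) - ui * (x * j) := by rw [h2]; noncomm_ring
        _ = ui := by noncomm_ring
    simp only
    rw [hv, ring_inverse_of h2 h1, ← mul_assoc, h1, one_mul]
  -- φ(ψ(y)) = y
  have right : ∀ y ∈ {y : R | y * (a + j) * y = y},
      (fun x : R => Ring.inverse (1 + x * j) * x)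
        ((fun y : R => Ring.inverse (1 - y * j) * y) y) = y := by
    intro y hy
    obtain ⟨hu, -⟩ := key2 y hy
    set vi := Ring.inverse (1 - y * j) with hvi
    have h1 : (1 - y * j) * vi = 1 := Ring.mul_inverse_cancel _ hu
    have h2 : vi * (1 - y * j) = 1 := Ring.inverse_mul_cancel _ hu
    have hv : 1 + (vi * y) * j = vi := by
      calc 1 + (vi * y) * j = vi * (1 - y * j) + vi * (y * j) := by rw [h2]; noncomm_ring
        _ = vi := by noncomm_ring
    simp only
    rw [hv, ring_inverse_of h2 h1, ← mul_assoc, h1, one_mul]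
  have hinv : Set.InvOn (fun y : R => Ring.inverse (1 - y * j) * y)
      (fun x : R => Ring.inverse (1 + x * j) * x)
      {x : R | x * a * x = x} {y : R | y * (a + j) * y = y} := ⟨left, right⟩
  have hmt1 : Set.MapsTo (fun x : R => Ring.inverse (1 + x * j) * x)
      {x : R | x * a * x = x} {y : R | y * (a + j) * y = y} :=
    fun x hx => (part1 x hx).2
  have hmt2 : Set.MapsTo (fun y : R => Ring.inverse (1 - y * j) * y)
      {y : R | y * (a + j) * y = y} {x : R | x * a * x = x} :=
    fun y hy => (key2 y hy).2
  exact ⟨part1, hinv.bijOn hmt1 hmt2, fun y hy => (key2 y hy).1, hinv⟩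
end

section
/- Let R be a ring with identity, a, b, c ∈ R and j_a, j_b, j_c ∈ J(R). Suppose the (b,c)-inverse a^{‖(b,c)} of a exists, and let b⁺ and c⁺ be reflexive inverses of b and c respectively (these exist since b and c are regular). Then the following are equivalent: (1) the (b + j_b, c + j_c)-inverse of a + j_a exists; (2) b + j_b and c + j_c are regular; (3) (1 − b·b⁺)·j_b·(1 + b⁺·j_b)⁻¹·(1 − b⁺·b) = 0 and (1 − c·c⁺)·j_c·(1 + c⁺·j_c)⁻¹·(1 − c⁺·c) = 0 (where 1 + b⁺·j_b and 1 + c⁺·j_c are units because j_b, j_c ∈ J(R)). -/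
/-- `y` is the (b,c)-inverse of `a`: `c*a*y = c`, `y*a*b = b`, `y ∈ bR ∩ Rc`. -/
def IsBCInverse {R : Type*} [Ring R] (a b c y : R) : Prop :=
  c * a * y = c ∧ y * a * b = b ∧ (∃ s, y = b * s) ∧ (∃ t, y = t * c)

/-!
Put `q = 1 + b⁺j`, a unit, and `k = (1 - bb⁺) j q⁻¹ ∈ J(R)`. Then `b + j = (b + k) q`, `b⁺k = 0`,
and for `w = b + k` the obstruction in (3) is `k (1 - b⁺b) = w - w b⁺ w`. If `w` is regular, this
is a regular element of `J(R)`, hence zero; if it is zero, `b⁺` is an inner inverse of `w`. This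
gives (2) ⇔ (3). When the obstruction vanishes, `b + j = p b q` with the unit `p = 1 + k b⁺`, and
likewise `c + j_c = r c s`. Then `s (a + j_a) p` differs from `a` by an element of `J(R)`, so it is
still (b,c)-invertible, and conjugating by the units yields the (b + j_b, c + j_c)-inverse of
`a + j_a`. Conversely a (b,c)-inverse `y = b s = t c` gives `b = b (s a) b` and `c = c (a t) c`,
so (1) ⇒ (2).
-/

section

variable {R : Type*} [Ring R]

local notation "𝓙" => Ideal.jacobson (⊥ : Ideal R)

section Jacobson

lemma exists_mul_one_add_eq_one_of_mem_jacobson_bot {x : R} (hx : x ∈ 𝓙) :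
    ∃ z, z * (1 + x) = 1 := by
  obtain ⟨z, hz⟩ := Ideal.mem_jacobson_iff.1 hx 1
  rw [Ideal.mem_bot] at hz
  exact ⟨z, by rw [← sub_eq_zero, ← hz]; noncomm_ring⟩

lemma isUnit_one_add_of_mem_jacobson_bot {x : R} (hx : x ∈ 𝓙) : IsUnit (1 + x) := by
  obtain ⟨z, hz⟩ := exists_mul_one_add_eq_one_of_mem_jacobson_bot hx
  -- `z = 1 - z x` has a left inverse as well, so `1 + x` is a two-sided inverse of `z`.
  have hz_eq : 1 + -(z * x) = z := by rw [← sub_eq_zero, ← hz]; noncomm_ring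
  obtain ⟨w, hw⟩ :=
    exists_mul_one_add_eq_one_of_mem_jacobson_bot (neg_mem (Ideal.mul_mem_left _ z hx))
  rw [hz_eq] at hw
  have hw_eq : w = 1 + x := left_inv_eq_right_inv hw hz
  exact ⟨⟨1 + x, z, hw_eq ▸ hw, hz⟩, rfl⟩

lemma eq_zero_of_mem_jacobson_bot_of_mul_mul_self {e x : R} (he : e ∈ 𝓙)
    (hexe : e * x * e = e) : e = 0 := by
  have hu := isUnit_one_add_of_mem_jacobson_bot (neg_mem (Ideal.mul_mem_left _ x he))
  rw [← hu.mul_left_eq_zero, mul_add, mul_one, mul_neg, ← mul_assoc, hexe, add_neg_cancel]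

end Jacobson

section Regular

def IsVonNeumannRegular (a : R) : Prop := ∃ x, a * x * a = a

lemma isVonNeumannRegular_mul_units_iff {w : R} (u : Rˣ) :
    IsVonNeumannRegular (w * u) ↔ IsVonNeumannRegular w := by
  constructor
  · rintro ⟨x, hx⟩
    refine ⟨u * x, ?_⟩
    calc w * (u * x) * w = w * u * x * (w * u) * ↑u⁻¹ := by simp only [mul_assoc, Units.mul_inv,
          mul_one]
      _ = w := by rw [hx, Units.mul_inv_cancel_right]
  · rintro ⟨x, hx⟩
    refine ⟨↑u⁻¹ * x, ?_⟩
    calc w * u * (↑u⁻¹ * x) * (w * u) = w * x * w * u := by simp only [mul_assoc,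
          Units.mul_inv_cancel_left]
      _ = w * u := by rw [hx]

variable {b bp k : R}

lemma isVonNeumannRegular_add_iff (h1 : b * bp * b = b) (h2 : bp * b * bp = bp) (hk : k ∈ 𝓙)
    (hbpk : bp * k = 0) : IsVonNeumannRegular (b + k) ↔ k * (1 - bp * b) = 0 := by
  have hw : (b + k) * bp * (b + k) = b + k * bp * b := by
    calc (b + k) * bp * (b + k) = b * bp * b + k * bp * b + (b + k) * (bp * k) := by noncomm_ring
      _ = b + k * bp * b := by rw [h1, hbpk, mul_zero, add_zero]
  have he : b + k - (b + k) * bp * (b + k) = k * (1 - bp * b) := by rw [hw]; noncomm_ring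
  constructor
  · rintro ⟨x, hx⟩
    rw [← he]
    set w := b + k
    set e := w - w * bp * w
    have hexw : e * x * w = e := by
      calc e * x * w = (w - w * bp * w) * x * w := rfl
        _ = w * x * w - w * bp * (w * x * w) := by noncomm_ring
        _ = e := by rw [hx]
    have hebp : e * bp = 0 := by
      calc e * bp = k * (bp - bp * b * bp) := by rw [he]; noncomm_ring
        _ = 0 := by rw [h2, sub_self, mul_zero]
    refine eq_zero_of_mem_jacobson_bot_of_mul_mul_self (x := x) ?_ ?_
    · rw [he]
      exact Ideal.mul_mem_right _ _ hk
    · calc e * x * e = e * x * (w - w * bp * w) := rfl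
        _ = e * x * w - e * x * w * bp * w := by noncomm_ring
        _ = e := by rw [hexw, hebp, zero_mul, sub_zero]
  · intro h
    exact ⟨bp, by rw [hw, ← sub_eq_zero, ← neg_eq_zero, ← h]; noncomm_ring⟩

end Regular

namespace IsBCInverse

variable {a b c y : R}

lemma isVonNeumannRegular_left (hy : IsBCInverse a b c y) : IsVonNeumannRegular b := by
  obtain ⟨-, hyab, ⟨s, rfl⟩, -⟩ := hy
  exact ⟨s * a, by simpa only [mul_assoc] using hyab⟩

lemma isVonNeumannRegular_right (hy : IsBCInverse a b c y) : IsVonNeumannRegular c := by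
  obtain ⟨hcay, -, -, ⟨t, rfl⟩⟩ := hy
  exact ⟨a * t, by simpa only [mul_assoc] using hcay⟩

lemma add_of_units {j : R} (hy : IsBCInverse a b c y) (u v : Rˣ) (hu : (u : R) = 1 + y * j)
    (hv : (v : R) = 1 + j * y) : IsBCInverse (a + j) b c (↑u⁻¹ * y) := by
  obtain ⟨hcay, hyab, ⟨s, hs⟩, ⟨t, ht⟩⟩ := hy
  have hswap : ↑u⁻¹ * y = y * ↑v⁻¹ := by
    rw [Units.inv_mul_eq_iff_eq_mul, ← mul_assoc, Units.eq_mul_inv_iff_mul_eq, hu, hv]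
    noncomm_ring
  refine ⟨?_, ?_, ⟨s * ↑v⁻¹, ?_⟩, ⟨↑u⁻¹ * t, ?_⟩⟩
  · calc c * (a + j) * (↑u⁻¹ * y) = (c * a * y + c * (j * y)) * ↑v⁻¹ := by
          rw [hswap]; noncomm_ring
      _ = c * v * ↑v⁻¹ := by rw [hcay, hv]; noncomm_ring
      _ = c := Units.mul_inv_cancel_right c v
  · calc ↑u⁻¹ * y * (a + j) * b = ↑u⁻¹ * (y * a * b + y * j * b) := by noncomm_ring
      _ = ↑u⁻¹ * (u * b) := by rw [hyab, hu]; noncomm_ring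
      _ = b := Units.inv_mul_cancel_left u b
  · rw [hswap, hs, mul_assoc]
  · rw [ht, mul_assoc]

lemma exists_add_of_mem_jacobson_bot {j : R} (hy : IsBCInverse a b c y) (hj : j ∈ 𝓙) :
    ∃ z, IsBCInverse (a + j) b c z := by
  obtain ⟨u, hu⟩ := isUnit_one_add_of_mem_jacobson_bot (Ideal.mul_mem_left _ y hj)
  obtain ⟨v, hv⟩ := isUnit_one_add_of_mem_jacobson_bot (Ideal.mul_mem_right y _ hj)
  exact ⟨_, hy.add_of_units u v hu hv⟩

lemma conj_units {z : R} (p q r s : Rˣ) (hz : IsBCInverse (s * a * p) b c z) :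
    IsBCInverse a (p * b * q) (r * c * s) (p * z * s) := by
  obtain ⟨hcaz, hzab, ⟨u, hu⟩, ⟨t, ht⟩⟩ := hz
  refine ⟨?_, ?_, ⟨↑q⁻¹ * u * s, ?_⟩, ⟨p * t * ↑r⁻¹, ?_⟩⟩
  · calc r * c * s * a * (p * z * s) = r * (c * (s * a * p) * z) * s := by noncomm_ring
      _ = r * c * s := by rw [hcaz]
  · calc p * z * s * a * (p * b * q) = p * (z * (s * a * p) * b) * q := by noncomm_ring
      _ = p * b * q := by rw [hzab]
  · simp only [hu, mul_assoc, Units.mul_inv_cancel_left]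
  · simp only [ht, mul_assoc, Units.inv_mul_cancel_left]

lemma exists_of_units_of_sub_mem_jacobson_bot {a' : R} (hy : IsBCInverse a b c y) (p q r s : Rˣ)
    (hp : (p : R) - 1 ∈ 𝓙) (hs : (s : R) - 1 ∈ 𝓙) (ha : a' - a ∈ 𝓙) :
    ∃ z, IsBCInverse a' (p * b * q) (r * c * s) z := by
  have hj : s * a' * p - a ∈ 𝓙 := by
    have h : s * a' * p - a = (s - 1) * a' * p + (a' - a) * p + a * (p - 1) := by noncomm_ring
    rw [h]
    exact add_mem (add_mem (Ideal.mul_mem_right _ _ (Ideal.mul_mem_right _ _ hs))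
      (Ideal.mul_mem_right _ _ ha)) (Ideal.mul_mem_left _ _ hp)
  obtain ⟨z, hz⟩ := hy.exists_add_of_mem_jacobson_bot hj
  rw [add_sub_cancel] at hz
  exact ⟨_, hz.conj_units p q r s⟩

end IsBCInverse

section Perturbation

variable {b bp j : R}

lemma add_eq_add_mul_units (q : Rˣ) (hq : (q : R) = 1 + bp * j) :
    b + j = (b + (1 - b * bp) * j * ↑q⁻¹) * q := by
  rw [add_mul, Units.inv_mul_cancel_right, hq]
  noncomm_ring

lemma isVonNeumannRegular_add_iff_of_mem_jacobson_bot (h1 : b * bp * b = b)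
    (h2 : bp * b * bp = bp) (hj : j ∈ 𝓙) :
    IsVonNeumannRegular (b + j) ↔
      (1 - b * bp) * j * Ring.inverse (1 + bp * j) * (1 - bp * b) = 0 := by
  obtain ⟨q, hq⟩ := isUnit_one_add_of_mem_jacobson_bot (Ideal.mul_mem_left _ bp hj)
  rw [← hq, Ring.inverse_unit, add_eq_add_mul_units (b := b) q hq,
    isVonNeumannRegular_mul_units_iff]
  refine isVonNeumannRegular_add_iff h1 h2 ?_ ?_
  · exact Ideal.mul_mem_right _ _ (Ideal.mul_mem_left _ _ hj)
  · calc bp * ((1 - b * bp) * j * ↑q⁻¹) = (bp - bp * b * bp) * j * ↑q⁻¹ := by noncomm_ring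
      _ = 0 := by rw [h2, sub_self, zero_mul, zero_mul]

lemma exists_units_add_eq_mul_mul (hj : j ∈ 𝓙)
    (h : (1 - b * bp) * j * Ring.inverse (1 + bp * j) * (1 - bp * b) = 0) :
    ∃ p q : Rˣ, (p : R) - 1 ∈ 𝓙 ∧ (q : R) - 1 ∈ 𝓙 ∧ b + j = p * b * q := by
  have hbpj : bp * j ∈ 𝓙 := Ideal.mul_mem_left _ bp hj
  obtain ⟨q, hq⟩ := isUnit_one_add_of_mem_jacobson_bot hbpj
  rw [← hq, Ring.inverse_unit] at h
  have hk : (1 - b * bp) * j * ↑q⁻¹ * bp ∈ 𝓙 :=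
    Ideal.mul_mem_right _ _ (Ideal.mul_mem_right _ _ (Ideal.mul_mem_left _ _ hj))
  obtain ⟨p, hp⟩ := isUnit_one_add_of_mem_jacobson_bot hk
  refine ⟨p, q, by rwa [hp, add_sub_cancel_left], by rwa [hq, add_sub_cancel_left], ?_⟩
  rw [add_eq_add_mul_units (b := b) q hq, hp]
  congr 1
  calc b + (1 - b * bp) * j * ↑q⁻¹
      = b + (1 - b * bp) * j * ↑q⁻¹ * (bp * b) + (1 - b * bp) * j * ↑q⁻¹ * (1 - bp * b) := by
        noncomm_ring
    _ = (1 + (1 - b * bp) * j * ↑q⁻¹ * bp) * b := by rw [h]; noncomm_ring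

end Perturbation

end

/-- if `a` is (b,c)-invertible, `b⁺, c⁺` are reflexive inverses of `b, c`
and `j_a, j_b, j_c` are in the Jacobson radical, then the (b+j_b, c+j_c)-invertibility
of `a + j_a` is equivalent to the regularity of `b + j_b` and `c + j_c`, and also to the
two displayed equations. -/
theorem stmt1 {R : Type*} [Ring R] (a b c y bp cp ja jb jc : R)
    (hja : ja ∈ Ideal.jacobson (⊥ : Ideal R))
    (hjb : jb ∈ Ideal.jacobson (⊥ : Ideal R))
    (hjc : jc ∈ Ideal.jacobson (⊥ : Ideal R))
    (hy : IsBCInverse a b c y)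
    (hbp : b * bp * b = b ∧ bp * b * bp = bp)
    (hcp : c * cp * c = c ∧ cp * c * cp = cp) :
    ((∃ z, IsBCInverse (a + ja) (b + jb) (c + jc) z) ↔
      ((∃ u, (b + jb) * u * (b + jb) = b + jb) ∧
       (∃ v, (c + jc) * v * (c + jc) = c + jc))) ∧
    ((∃ z, IsBCInverse (a + ja) (b + jb) (c + jc) z) ↔
      ((1 - b * bp) * jb * Ring.inverse (1 + bp * jb) * (1 - bp * b) = 0 ∧
       (1 - c * cp) * jc * Ring.inverse (1 + cp * jc) * (1 - cp * c) = 0)) := by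
  have h23b := isVonNeumannRegular_add_iff_of_mem_jacobson_bot hbp.1 hbp.2 hjb
  have h23c := isVonNeumannRegular_add_iff_of_mem_jacobson_bot hcp.1 hcp.2 hjc
  have h12 : (∃ z, IsBCInverse (a + ja) (b + jb) (c + jc) z) →
      IsVonNeumannRegular (b + jb) ∧ IsVonNeumannRegular (c + jc) :=
    fun ⟨_, hz⟩ ↦ ⟨hz.isVonNeumannRegular_left, hz.isVonNeumannRegular_right⟩
  have h31 (h : (1 - b * bp) * jb * Ring.inverse (1 + bp * jb) * (1 - bp * b) = 0 ∧
      (1 - c * cp) * jc * Ring.inverse (1 + cp * jc) * (1 - cp * c) = 0) :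
      ∃ z, IsBCInverse (a + ja) (b + jb) (c + jc) z := by
    obtain ⟨p, q, hp, -, hpq⟩ := exists_units_add_eq_mul_mul hjb h.1
    obtain ⟨r, s, -, hs, hrs⟩ := exists_units_add_eq_mul_mul hjc h.2
    rw [hpq, hrs]
    exact hy.exists_of_units_of_sub_mem_jacobson_bot p q r s hp hs (by rwa [add_sub_cancel_left])
  exact ⟨⟨h12, fun h ↦ h31 ⟨h23b.1 h.1, h23c.1 h.2⟩⟩,
    ⟨fun h ↦ ⟨h23b.1 (h12 h).1, h23c.1 (h12 h).2⟩, h31⟩⟩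
end

section
/- Let R be a ring with identity, a, b, c ∈ R and j_a ∈ J(R). Then the (b,c)-inverse of a exists if and only if the (b,c)-inverse of a + j_a exists. In this case, 1 + a^{‖(b,c)}·j_a is a unit and (a + j_a)^{‖(b,c)} = (1 + a^{‖(b,c)}·j_a)⁻¹·a^{‖(b,c)}. -/
/-- Every element `1 + j` with `j` in the Jacobson radical has a left inverse. -/
lemma leftInv_of_jac {R : Type*} [Ring R] {j : R}
    (hj : j ∈ Ideal.jacobson (⊥ : Ideal R)) : ∃ z, z * (1 + j) = 1 := by
  obtain ⟨z, hz⟩ := Ideal.mem_jacobson_iff.1 hj 1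
  rw [Ideal.mem_bot, sub_eq_zero, mul_one] at hz
  exact ⟨z, by rw [mul_add, mul_one, add_comm]; exact hz⟩

/-- `1 + j` is a unit for `j` in the Jacobson radical. -/
lemma isUnit_one_add_jac {R : Type*} [Ring R] {j : R}
    (hj : j ∈ Ideal.jacobson (⊥ : Ideal R)) : IsUnit (1 + j) := by
  obtain ⟨z, hz⟩ := leftInv_of_jac hj
  have hz' : z = 1 + -(z * j) := by
    have h := hz
    rw [mul_add, mul_one] at h
    linear_combination (norm := noncomm_ring) h
  have hmem : -(z * j) ∈ Ideal.jacobson (⊥ : Ideal R) :=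
    neg_mem (Ideal.mul_mem_left _ z hj)
  obtain ⟨w, hw⟩ := leftInv_of_jac hmem
  rw [← hz'] at hw
  have hwz : w = 1 + j := by
    calc w = w * (z * (1 + j)) := by rw [hz, mul_one]
    _ = (w * z) * (1 + j) := by rw [mul_assoc]
    _ = 1 + j := by rw [hw, one_mul]
  rw [hwz] at hw
  exact ⟨⟨1 + j, z, hw, hz⟩, rfl⟩

lemma isUnit_one_add_mul_jac {R : Type*} [Ring R] {j : R}
    (hj : j ∈ Ideal.jacobson (⊥ : Ideal R)) (r : R) : IsUnit (1 + r * j) :=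
  isUnit_one_add_jac (Ideal.mul_mem_left _ r hj)

/-- If `1 + a*b` is a unit then so is `1 + b*a`. -/
lemma isUnit_one_add_swap {R : Type*} [Ring R] {a b : R}
    (h : IsUnit (1 + a * b)) : IsUnit (1 + b * a) := by
  set u : R := Ring.inverse (1 + a * b) with hu_def
  have h1 : u * (1 + a * b) = 1 := Ring.inverse_mul_cancel _ h
  have h2 : (1 + a * b) * u = 1 := Ring.mul_inverse_cancel _ h
  have l : (1 - b * u * a) * (1 + b * a) = 1 := by
    have h : b * (u * (1 + a * b)) * a = b * a := by rw [h1, mul_one]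
    linear_combination (norm := noncomm_ring) -h
  have r : (1 + b * a) * (1 - b * u * a) = 1 := by
    have h : b * ((1 + a * b) * u) * a = b * a := by rw [h2, mul_one]
    linear_combination (norm := noncomm_ring) -h
  exact ⟨⟨1 + b * a, 1 - b * u * a, r, l⟩, rfl⟩

/-- The key construction lemma. -/
lemma bc_perturb {R : Type*} [Ring R] {a b c ja y : R}
    (hja : ja ∈ Ideal.jacobson (⊥ : Ideal R)) (hy : IsBCInverse a b c y) :
    IsUnit (1 + y * ja) ∧ IsBCInverse (a + ja) b c (Ring.inverse (1 + y * ja) * y) := by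
  obtain ⟨hcy, hyb, ⟨s, hs⟩, ⟨t, ht⟩⟩ := hy
  set u : R := 1 + y * ja with hu_def
  set v : R := 1 + ja * y with hv_def
  have hu : IsUnit u := isUnit_one_add_mul_jac hja y
  have hv : IsUnit v := isUnit_one_add_swap hu
  have huu : Ring.inverse u * u = 1 := Ring.inverse_mul_cancel u hu
  have huu' : u * Ring.inverse u = 1 := Ring.mul_inverse_cancel u hu
  have hvv : Ring.inverse v * v = 1 := Ring.inverse_mul_cancel v hv
  have hvv' : v * Ring.inverse v = 1 := Ring.mul_inverse_cancel v hv
  have hkey : y * v = u * y := by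
    rw [hu_def, hv_def]; noncomm_ring
  have hswap : Ring.inverse u * y = y * Ring.inverse v := by
    calc Ring.inverse u * y = Ring.inverse u * y * (v * Ring.inverse v) := by
          rw [hvv', mul_one]
    _ = Ring.inverse u * (y * v) * Ring.inverse v := by
          rw [← mul_assoc, mul_assoc (Ring.inverse u) y v]
    _ = Ring.inverse u * (u * y) * Ring.inverse v := by rw [hkey]
    _ = y * Ring.inverse v := by rw [← mul_assoc, huu, one_mul]
  refine ⟨hu, ?_, ?_, ?_, ?_⟩
  · -- c * (a + ja) * (u⁻¹ * y) = c
    rw [hswap]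
    have : c * (a + ja) * (y * Ring.inverse v) = (c * a * y + c * ja * y) * Ring.inverse v := by
      noncomm_ring
    rw [this, hcy]
    have : c + c * ja * y = c * v := by rw [hv_def]; noncomm_ring
    rw [this, mul_assoc, hvv', mul_one]
  · -- (u⁻¹ * y) * (a + ja) * b = b
    have : Ring.inverse u * y * (a + ja) * b
        = Ring.inverse u * (y * a * b + y * ja * b) := by noncomm_ring
    rw [this, hyb]
    have : b + y * ja * b = u * b := by rw [hu_def]; noncomm_ring
    rw [this, ← mul_assoc, huu, one_mul]
  · exact ⟨s * Ring.inverse v, by rw [hswap, hs, mul_assoc]⟩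
  · exact ⟨Ring.inverse u * t, by rw [ht, mul_assoc]⟩

/-- for `j_a` in the Jacobson radical, `a^{‖(b,c)}` exists iff
`(a + j_a)^{‖(b,c)}` exists, and in this case `1 + a^{‖(b,c)} j_a` is a unit and
`(a + j_a)^{‖(b,c)} = (1 + a^{‖(b,c)} j_a)⁻¹ a^{‖(b,c)}`. -/
theorem stmt4 {R : Type*} [Ring R] (a b c ja : R)
    (hja : ja ∈ Ideal.jacobson (⊥ : Ideal R)) :
    ((∃ y, IsBCInverse a b c y) ↔ (∃ z, IsBCInverse (a + ja) b c z)) ∧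
    (∀ y, IsBCInverse a b c y →
      IsUnit (1 + y * ja) ∧
      IsBCInverse (a + ja) b c (Ring.inverse (1 + y * ja) * y)) := by
  constructor
  · constructor
    · rintro ⟨y, hy⟩
      exact ⟨_, (bc_perturb hja hy).2⟩
    · rintro ⟨z, hz⟩
      have hnja : -ja ∈ Ideal.jacobson (⊥ : Ideal R) := neg_mem hja
      have := (bc_perturb hnja hz).2
      rw [add_neg_cancel_right] at this
      exact ⟨_, this⟩
  · exact fun y hy => bc_perturb hja hy
end

section
/- Let R be a ring with identity, a ∈ R and j ∈ J(R). Suppose a is group invertible and a⁺ is a reflexive inverse of a. Then the following are equivalent: (1) a + j is group invertible; (2) a + j is regular; (3) (1 − a·a⁺)·j·(1 + a⁺·j)⁻¹·(1 − a⁺·a) = 0. In this case, setting j₂ := j + a·j·a⁺ + a⁺·j·a + j²·a⁺ + a⁺·j² + a⁺·j·a·j·a⁺ + a⁺·j³·a⁺, the element 1 + j₂·a# is a unit and (a + j)# = (1 + j·a⁺)·a#·(1 + j₂·a#)⁻¹·(1 + a⁺·j). -/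
/-!
Put `e = 1 - a a⁺`, `f = 1 - a⁺ a`, `U = (1 + a⁺ j)⁻¹` and `s = e (j U) f`, an element of `J(R)`.
Because `a⁺ e = 0`, `(a + j) U = a + e (j U) = (1 + e (j U) a⁺) (a + s)`, so `a + j` is regular iff
`a + s` is. Since `e a = 0 = a f`, compressing `(a + s) y (a + s) = a + s` by `e` and `f` gives
`s y s = s`, and an element of the radical with this property vanishes.

Conversely, if `s = 0` then `(a + j) U = w a` and `(1 + j a⁺)⁻¹ (a + j) = a w'` for units `w, w'`,
so `1 - a a#` annihilates these twists of `a + j`. Moreover `(1 + a⁺ j) (a + j) (1 + j a⁺) = a + j₂`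
with `j₂ ∈ J(R)` and `(a + j₂) a# = (1 + j₂ a#) - (1 - a a#)`; multiplying out, the candidate `x`
satisfies `(a + j)² x = a + j = x (a + j)²` and `x (a + j) x = x`, which characterises the group
inverse.
-/

def IsGroupInverse {R : Type*} [Ring R] (a x : R) : Prop :=
  a * x * a = a ∧ x * a * x = x ∧ a * x = x * a

section Jacobson

variable {R : Type*} [Ring R]

theorem isUnit_one_add_of_mem_jacobson_bot_s7 {z : R} (hz : z ∈ Ideal.jacobson (⊥ : Ideal R)) :
    IsUnit (1 + z) := by
  have left_inv : ∀ w ∈ Ideal.jacobson (⊥ : Ideal R), ∃ s, s * (1 + w) = 1 := fun w hw => by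
    obtain ⟨s, hs⟩ := Ideal.exists_mul_add_sub_mem_of_mem_jacobson w hw
    exact ⟨s, by rwa [Ideal.mem_bot, sub_eq_zero, add_comm w] at hs⟩
  obtain ⟨s, hs⟩ := left_inv z hz
  -- `s = 1 - s * z` is again of the form `1 + w` with `w` in the radical
  obtain ⟨r, hr⟩ := left_inv (-(s * z)) (neg_mem (Ideal.mul_mem_left _ s hz))
  have hrs : r * s = 1 := by linear_combination (norm := noncomm_ring) hr + r * hs
  have hr_eq : r = 1 + z := left_inv_eq_right_inv hrs hs
  exact ⟨⟨1 + z, s, hr_eq ▸ hrs, hs⟩, rfl⟩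

theorem eq_zero_of_mem_jacobson_bot_of_mul_mul_eq {z y : R}
    (hz : z ∈ Ideal.jacobson (⊥ : Ideal R)) (h : z * y * z = z) : z = 0 := by
  have hunit : IsUnit (1 + -(z * y)) :=
    isUnit_one_add_of_mem_jacobson_bot_s7 (neg_mem (Ideal.mul_mem_right y _ hz))
  rw [← hunit.mul_right_eq_zero]
  linear_combination (norm := noncomm_ring) -h

theorem one_add_mul_mul_one_add_mul_sub_mem_jacobson_bot {j : R}
    (hj : j ∈ Ideal.jacobson (⊥ : Ideal R)) (a r t : R) :
    (1 + r * j) * (a + j) * (1 + j * t) - a ∈ Ideal.jacobson (⊥ : Ideal R) := by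
  have hexpand : (1 + r * j) * (a + j) * (1 + j * t) - a
      = j + (a + j) * j * t + r * j * ((a + j) * (1 + j * t)) := by noncomm_ring
  rw [hexpand]
  refine add_mem (add_mem hj ?_) ?_
  · exact Ideal.mul_mem_right t _ (Ideal.mul_mem_left _ (a + j) hj)
  · exact Ideal.mul_mem_right _ _ (Ideal.mul_mem_left _ r hj)

end Jacobson

section Ring

variable {R : Type*} [Ring R]

theorem IsUnit.one_add_mul_swap {x y : R} (h : IsUnit (1 + x * y)) : IsUnit (1 + y * x) := by
  refine ⟨⟨1 + y * x, 1 - y * Ring.inverse (1 + x * y) * x, ?_, ?_⟩, rfl⟩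
  · linear_combination (norm := noncomm_ring) -(y * Ring.mul_inverse_cancel _ h * x)
  · linear_combination (norm := noncomm_ring) -(y * Ring.inverse_mul_cancel _ h * x)

theorem exists_mul_mul_eq_self_of_isUnit {b c u v : R} (hu : IsUnit u) (hv : IsUnit v)
    (hb : u * c * v = b) (hreg : ∃ x, b * x * b = b) : ∃ y, c * y * c = c := by
  obtain ⟨u, rfl⟩ := hu
  obtain ⟨v, rfl⟩ := hv
  obtain ⟨x, hx⟩ := hreg
  refine ⟨v * x * u, ?_⟩
  subst hb
  have := congrArg (fun w => (↑u⁻¹ : R) * w * ↑v⁻¹) hx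
  simpa [mul_assoc] using this

theorem isGroupInverse_of_mul_mul_eq {b x : R} (h₁ : b * b * x = b) (h₂ : x * b * b = b)
    (h₃ : x * b * x = x) : IsGroupInverse b x := by
  have hcomm : b * x = x * b :=
    calc b * x = x * b * (b * x) := by rw [← mul_assoc, h₂]
      _ = x * (b * b * x) := by simp only [mul_assoc]
      _ = x * b := by rw [h₁]
  exact ⟨by rw [mul_assoc, ← hcomm, ← mul_assoc, h₁], h₃, hcomm⟩

theorem mul_mul_eq_self_of_add_regular {a s e f y : R} (hea : e * a = 0) (haf : a * f = 0)
    (hes : e * s = s) (hsf : s * f = s) (hy : (a + s) * y * (a + s) = a + s) :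
    s * y * s = s := by
  have hl : e * (a + s) = s := by rw [mul_add, hea, hes, zero_add]
  have hr : (a + s) * f = s := by rw [add_mul, haf, hsf, zero_add]
  calc s * y * s = e * (a + s) * y * ((a + s) * f) := by rw [hl, hr]
    _ = e * ((a + s) * y * (a + s)) * f := by simp only [mul_assoc]
    _ = s := by rw [hy, hl, hsf]

end Ring

section ReflexiveInverse

variable {R : Type*} [Ring R] {a ap j U : R}

theorem add_mul_eq_add_mul_of_mul_eq_one (hU : (1 + ap * j) * U = 1) :
    (a + j) * U = a + (1 - a * ap) * (j * U) := by
  linear_combination (norm := noncomm_ring) a * hU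

theorem add_mul_eq_one_add_mul_mul_add (h₂ : ap * a * ap = ap) (k : R) :
    a + (1 - a * ap) * k
      = (1 + (1 - a * ap) * k * ap) * (a + (1 - a * ap) * k * (1 - ap * a)) := by
  linear_combination (norm := noncomm_ring) (1 - a * ap) * k * h₂ * k * (1 - ap * a)

theorem mul_inverse_mul_eq_zero_of_regular (hj : j ∈ Ideal.jacobson (⊥ : Ideal R))
    (h₁ : a * ap * a = a) (h₂ : ap * a * ap = ap)
    (hreg : ∃ x, (a + j) * x * (a + j) = a + j) :
    (1 - a * ap) * j * Ring.inverse (1 + ap * j) * (1 - ap * a) = 0 := by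
  have hu : IsUnit (1 + ap * j) :=
    isUnit_one_add_of_mem_jacobson_bot_s7 (Ideal.mul_mem_left _ ap hj)
  set k := j * Ring.inverse (1 + ap * j)
  have hk : k ∈ Ideal.jacobson (⊥ : Ideal R) := Ideal.mul_mem_right _ _ hj
  have hw : IsUnit (1 + (1 - a * ap) * k * ap) :=
    isUnit_one_add_of_mem_jacobson_bot_s7 (Ideal.mul_mem_right _ _ (Ideal.mul_mem_left _ _ hk))
  have hfactor : (1 + (1 - a * ap) * k * ap) * (a + (1 - a * ap) * k * (1 - ap * a))
      * (1 + ap * j) = a + j := by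
    rw [← add_mul_eq_one_add_mul_mul_add h₂, ← add_mul_eq_add_mul_of_mul_eq_one
      (Ring.mul_inverse_cancel _ hu), mul_assoc, Ring.inverse_mul_cancel _ hu, mul_one]
  obtain ⟨y, hy⟩ := exists_mul_mul_eq_self_of_isUnit hw hu hfactor hreg
  have he : IsIdempotentElem (1 - a * ap) :=
    IsIdempotentElem.one_sub (show a * ap * (a * ap) = a * ap by rw [← mul_assoc, h₁])
  have hf : IsIdempotentElem (1 - ap * a) :=
    IsIdempotentElem.one_sub (show ap * a * (ap * a) = ap * a by rw [← mul_assoc, h₂])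
  rw [mul_assoc (1 - a * ap)]
  refine eq_zero_of_mem_jacobson_bot_of_mul_mul_eq
    (Ideal.mul_mem_right _ _ (Ideal.mul_mem_left _ _ hk)) (mul_mul_eq_self_of_add_regular
      (e := 1 - a * ap) (f := 1 - ap * a) (by rw [sub_mul, one_mul, h₁, sub_self])
      (by rw [mul_sub, mul_one, ← mul_assoc, h₁, sub_self]) ?_ ?_ hy)
  · rw [← mul_assoc, ← mul_assoc, he.eq]
  · rw [mul_assoc, hf.eq]

theorem add_mul_eq_one_add_mul_mul (hU : (1 + ap * j) * U = 1)
    (hs : (1 - a * ap) * j * U * (1 - ap * a) = 0) :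
    (a + j) * U = (1 + (1 - a * ap) * j * U * ap) * a := by
  linear_combination (norm := noncomm_ring) a * hU + hs

theorem mul_add_eq_mul_one_add {V : R} (hU : (1 + ap * j) * U = 1) (hV : V * (1 + j * ap) = 1)
    (hs : (1 - a * ap) * j * U * (1 - ap * a) = 0) :
    V * (a + j) = a * (1 + ap * j * U * (1 - ap * a)) := by
  linear_combination (norm := noncomm_ring)
    hV * a - V * j * hU * (1 - ap * a) + hV * j * U * (1 - ap * a) + hs

end ReflexiveInverse

theorem isGroupInverse_of_mul_mul_eq_add {R : Type*} [Ring R] {a ag b j₂ u v : R}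
    (hag : IsGroupInverse a ag) (hu : IsUnit u) (hv : IsUnit v) (ht : IsUnit (1 + j₂ * ag))
    (hc : u * b * v = a + j₂) (hbu : b * Ring.inverse u * (1 - a * ag) = 0)
    (hvb : (1 - a * ag) * (Ring.inverse v * b) = 0) :
    IsGroupInverse b (v * ag * Ring.inverse (1 + j₂ * ag) * u) := by
  obtain ⟨-, h₂, h₃⟩ := hag
  set U := Ring.inverse u
  set V := Ring.inverse v
  set T := Ring.inverse (1 + j₂ * ag)
  set T' := Ring.inverse (1 + ag * j₂)
  have hUu : U * u = 1 := Ring.inverse_mul_cancel _ hu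
  have hvV : v * V = 1 := Ring.mul_inverse_cancel _ hv
  have hVv : V * v = 1 := Ring.inverse_mul_cancel _ hv
  have hT : (1 + j₂ * ag) * T = 1 := Ring.mul_inverse_cancel _ ht
  have hT' : T' * (1 + ag * j₂) = 1 := Ring.inverse_mul_cancel _ ht.one_add_mul_swap
  have hagT : ag * T = T' * ag := by
    linear_combination (norm := noncomm_ring) T' * ag * hT - hT' * ag * T
  have hpag : (1 - a * ag) * ag = 0 := by rw [sub_mul, one_mul, h₃, h₂, sub_self]
  have hbx : b * (v * ag * T * u) = 1 - U * (1 - a * ag) * T * u := by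
    linear_combination (norm := noncomm_ring)
      U * hc * ag * T * u - hUu * b * v * ag * T * u + hUu + U * hT * u
  have hxb : v * ag * T * u * b = 1 - v * T' * (1 - a * ag) * V := by
    linear_combination (norm := noncomm_ring)
      v * hagT * u * b + v * T' * ag * hc * V - v * T' * h₃ * V - v * T' * ag * u * b * hvV + hvV + v * hT' * V
  refine isGroupInverse_of_mul_mul_eq ?_ ?_ ?_
  · rw [mul_assoc, hbx]
    linear_combination (norm := noncomm_ring) -(hbu * T * u)
  · rw [hxb]
    linear_combination (norm := noncomm_ring) -(v * T' * hvb)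
  · rw [hxb]
    linear_combination (norm := noncomm_ring)
      -(v * T' * (1 - a * ag) * hVv * ag * T * u) - v * T' * hpag * T * u

theorem isUnit_and_isGroupInverse_add_of_mul_inverse_mul_eq_zero {R : Type*} [Ring R]
    {a ag ap j j₂ : R} (hj : j ∈ Ideal.jacobson (⊥ : Ideal R)) (hag : IsGroupInverse a ag)
    (hs : (1 - a * ap) * j * Ring.inverse (1 + ap * j) * (1 - ap * a) = 0)
    (hc : (1 + ap * j) * (a + j) * (1 + j * ap) = a + j₂) :
    IsUnit (1 + j₂ * ag) ∧
      IsGroupInverse (a + j) ((1 + j * ap) * ag * Ring.inverse (1 + j₂ * ag) * (1 + ap * j)) := by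
  have hu : IsUnit (1 + ap * j) :=
    isUnit_one_add_of_mem_jacobson_bot_s7 (Ideal.mul_mem_left _ ap hj)
  have hv : IsUnit (1 + j * ap) :=
    isUnit_one_add_of_mem_jacobson_bot_s7 (Ideal.mul_mem_right ap _ hj)
  have hj₂ : j₂ ∈ Ideal.jacobson (⊥ : Ideal R) := by
    have := one_add_mul_mul_one_add_mul_sub_mem_jacobson_bot hj a ap ap
    rwa [hc, add_sub_cancel_left] at this
  have ht : IsUnit (1 + j₂ * ag) :=
    isUnit_one_add_of_mem_jacobson_bot_s7 (Ideal.mul_mem_right ag _ hj₂)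
  have ha_sub : a * (1 - a * ag) = 0 := by
    rw [mul_sub, mul_one, hag.2.2, ← mul_assoc, hag.1, sub_self]
  have hsub_a : (1 - a * ag) * a = 0 := by rw [sub_mul, one_mul, hag.1, sub_self]
  refine ⟨ht, isGroupInverse_of_mul_mul_eq_add hag hu hv ht hc ?_ ?_⟩
  · rw [add_mul_eq_one_add_mul_mul (Ring.mul_inverse_cancel _ hu) hs, mul_assoc, ha_sub, mul_zero]
  · rw [mul_add_eq_mul_one_add (Ring.mul_inverse_cancel _ hu) (Ring.inverse_mul_cancel _ hv) hs,
      ← mul_assoc, hsub_a, zero_mul]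

/-- if `a` is group invertible (with group inverse `ag`), `a⁺` is a
reflexive inverse of `a` and `j` is in the Jacobson radical, then (1) `a + j` is group
invertible ↔ (2) `a + j` is regular ↔ (3) `(1 - a a⁺) j (1 + a⁺ j)⁻¹ (1 - a⁺ a) = 0`;
in this case, with `j₂` as displayed, `1 + j₂ a#` is a unit and
`(a + j)# = (1 + j a⁺) a# (1 + j₂ a#)⁻¹ (1 + a⁺ j)`. -/
theorem stmt7 {R : Type*} [Ring R] (a ag ap j : R)
    (hj : j ∈ Ideal.jacobson (⊥ : Ideal R))
    (hag : IsGroupInverse a ag)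
    (hap : a * ap * a = a ∧ ap * a * ap = ap) :
    ((∃ x, IsGroupInverse (a + j) x) ↔ (∃ x, (a + j) * x * (a + j) = a + j)) ∧
    ((∃ x, IsGroupInverse (a + j) x) ↔
      (1 - a * ap) * j * Ring.inverse (1 + ap * j) * (1 - ap * a) = 0) ∧
    ((1 - a * ap) * j * Ring.inverse (1 + ap * j) * (1 - ap * a) = 0 →
      ∀ j₂ : R, j₂ = j + a * j * ap + ap * j * a + j * j * ap + ap * (j * j)
          + ap * j * a * j * ap + ap * (j * j * j) * ap →
        IsUnit (1 + j₂ * ag) ∧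
        IsGroupInverse (a + j)
          ((1 + j * ap) * ag * Ring.inverse (1 + j₂ * ag) * (1 + ap * j))) := by
  obtain ⟨h₁, h₂⟩ := hap
  have cond_of_regular := mul_inverse_mul_eq_zero_of_regular hj h₁ h₂
  have isGroupInverse_of_cond :
      (1 - a * ap) * j * Ring.inverse (1 + ap * j) * (1 - ap * a) = 0 →
        ∃ x, IsGroupInverse (a + j) x := fun hs =>
    ⟨_, (isUnit_and_isGroupInverse_add_of_mul_inverse_mul_eq_zero hj hag hs
      (add_sub_cancel _ _).symm).2⟩
  refine ⟨⟨fun ⟨x, hx⟩ => ⟨x, hx.1⟩, fun h => isGroupInverse_of_cond (cond_of_regular h)⟩,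
    ⟨fun ⟨x, hx⟩ => cond_of_regular ⟨x, hx.1⟩, isGroupInverse_of_cond⟩, fun hs j₂ hj₂ => ?_⟩
  exact isUnit_and_isGroupInverse_add_of_mul_inverse_mul_eq_zero hj hag hs
    (by rw [hj₂]; noncomm_ring)
end

section
/- Let R be a ring with identity and involution *, a ∈ R and j ∈ J(R). Suppose a is core invertible and a⁺ is a reflexive inverse of a. Then the following are equivalent: (1) a + j is core invertible; (2) a + j is regular; (3) (1 − a·a⁺)·j·(1 + a⁺·j)⁻¹·(1 − a⁺·a) = 0. In this case, setting j₃ := j + a·j·a⁺ + (a⁺)*·j*·a + j²·a⁺ + (a⁺)*·j*·j + (a⁺)*·j*·a·j·a⁺ + (a⁺)*·j*·j²·a⁺, the element 1 + j₃·a⊕ is a unit and the core inverse of a + j equals (1 + j·a⁺)·a⊕·(1 + j₃·a⊕)⁻¹·(1 + (a⁺)*·j*), where a⊕ denotes the core inverse of a. -/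
/-!
Write `w = 1 + j a⁺` and `d = a + j (1 + a⁺ j)⁻¹ (1 - a⁺ a)`, so that `a + j = w d` with `w` a
unit. The element `s = (1 - a a⁺) j (1 + a⁺ j)⁻¹ (1 - a⁺ a)` of (3) equals both `(1 - a a⁺) d` and
`(1 - a a⁺) d (1 - a⁺ a)`, while `d (1 - a⁺ a) ∈ J(R)`; so if `d z d = d` then `s = s r` with
`r ∈ J(R)`, forcing `s = 0`. Conversely `s = 0` says `d ∈ a R`, so `d` is fixed by the hermitian
idempotent `e = a a⊕`. For such `d` and any unit `w`, `w a⊕ k⁻¹ w*` is the core inverse of `w d`,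
where `k = 1 - e + w* w d w a⊕` (provided `k` and `1 - e + d w a⊕` are units); here
`w* (a + j) w = a + j₃` turns `k` into `1 + j₃ a⊕`.
-/

/-- `x` is the core inverse of `a`: `x a² = a`, `a x² = x`, `(a x)* = a x`. -/
def IsCoreInverse {R : Type*} [Ring R] [StarRing R] (a x : R) : Prop :=
  x * (a * a) = a ∧ a * (x * x) = x ∧ star (a * x) = a * x

namespace Ideal

variable {R : Type*} [Ring R]

theorem exists_mul_one_add_eq_one {j : R} (hj : j ∈ jacobson (⊥ : Ideal R)) :
    ∃ s, s * (1 + j) = 1 := by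
  obtain ⟨s, hs⟩ := exists_mul_add_sub_mem_of_mem_jacobson j hj
  exact ⟨s, by rwa [mem_bot, sub_eq_zero, add_comm] at hs⟩

theorem isUnit_one_add_of_mem_jacobson_bot {j : R} (hj : j ∈ jacobson (⊥ : Ideal R)) :
    IsUnit (1 + j) := by
  obtain ⟨s, hs⟩ := exists_mul_one_add_eq_one hj
  obtain ⟨t, ht⟩ := exists_mul_one_add_eq_one (neg_mem (mul_mem_left _ s hj))
  have hs' : 1 + -(s * j) = s := by rw [← sub_eq_add_neg, sub_eq_iff_eq_add, ← hs]; noncomm_ring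
  rw [hs'] at ht
  have ht' : t = 1 + j := by
    calc t = t * (s * (1 + j)) := by rw [hs, mul_one]
      _ = 1 + j := by rw [← mul_assoc, ht, one_mul]
  exact isUnit_iff_exists.2 ⟨s, ht' ▸ ht, hs⟩

theorem mem_jacobson_bot_of_forall_isUnit {x : R} (h : ∀ y, IsUnit (1 + y * x)) :
    x ∈ jacobson (⊥ : Ideal R) := by
  refine mem_jacobson_iff.2 fun y => ?_
  obtain ⟨u, hu⟩ := h y
  refine ⟨↑u⁻¹, ?_⟩
  rw [mem_bot, sub_eq_zero, mul_assoc, add_comm, ← mul_one_add, ← hu, Units.inv_mul]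

theorem star_mem_jacobson_bot [StarRing R] {j : R} (hj : j ∈ jacobson (⊥ : Ideal R)) :
    star j ∈ jacobson (⊥ : Ideal R) := by
  refine mem_jacobson_bot_of_forall_isUnit fun y => ?_
  have h := (isUnit_one_add_of_mem_jacobson_bot (mul_mem_right (star y) _ hj)).star
  rwa [star_add, star_one, star_mul, star_star] at h

theorem eq_zero_of_eq_mul_of_mem_jacobson_bot {s r : R} (hr : r ∈ jacobson (⊥ : Ideal R))
    (h : s = s * r) : s = 0 := by
  have hunit : IsUnit (1 - r) := by
    simpa only [sub_eq_add_neg] using isUnit_one_add_of_mem_jacobson_bot (neg_mem hr)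
  rw [← hunit.mul_left_eq_zero, mul_sub, mul_one, ← h, sub_self]

end Ideal

theorem isSelfAdjoint_mul_of_star_mul_mul_eq {R : Type*} [Ring R] [StarRing R] {b y : R}
    (h : star b * (b * y) = star b) : IsSelfAdjoint (b * y) := by
  have hs : star (b * y) = star (b * y) * (b * y) := by
    conv_lhs => rw [star_mul, ← h, ← mul_assoc, ← star_mul]
  have hsa : IsSelfAdjoint (star (b * y)) := hs ▸ IsSelfAdjoint.star_mul_self (b * y)
  exact IsSelfAdjoint.star_iff.1 hsa

namespace IsCoreInverse

variable {R : Type*} [Ring R] [StarRing R] {a x : R}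

theorem mul_mul_self (h : IsCoreInverse a x) : a * x * a = a := by
  obtain ⟨h₁, h₂, -⟩ := h
  calc a * x * a = a * x * (x * (a * a)) := by rw [h₁]
    _ = a * (x * x) * (a * a) := by noncomm_ring
    _ = a := by rw [h₂, h₁]

theorem inv_mul_mul_inv (h : IsCoreInverse a x) : x * (a * x) = x := by
  obtain ⟨h₁, h₂, -⟩ := h
  calc x * (a * x) = x * (a * (a * (x * x))) := by rw [h₂]
    _ = x * (a * a) * (x * x) := by noncomm_ring
    _ = x := by rw [h₁, h₂]

theorem mul_mul_inv (h : IsCoreInverse a x) : a * x * x = x := by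
  rw [mul_assoc, h.2.1]

theorem isIdempotentElem_mul (h : IsCoreInverse a x) : IsIdempotentElem (a * x) := by
  rw [IsIdempotentElem, ← mul_assoc, h.mul_mul_self]

theorem inv_mul_mul_of_mul_mul_eq {d : R} (h : IsCoreInverse a x) (hd : a * x * d = d) :
    x * (a * d) = d := by
  calc x * (a * d) = x * (a * (a * x * d)) := by rw [hd]
    _ = x * (a * a) * x * d := by noncomm_ring
    _ = d := by rw [h.1, hd]

theorem mul_mul_eq_of_mul_mul_eq {b d : R} (h : IsCoreInverse a x) (hd : a * b * d = d) :
    a * x * d = d := by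
  calc a * x * d = a * x * (a * b * d) := by rw [hd]
    _ = a * x * a * b * d := by noncomm_ring
    _ = d := by rw [h.mul_mul_self, hd]

theorem inverse_mul_mul_eq {y : R} (h : IsCoreInverse a x) (hk : IsUnit (1 - a * x + y * x)) :
    Ring.inverse (1 - a * x + y * x) * (y * x) = a * x := by
  have hk_compl : (1 - a * x + y * x) * (1 - a * x) = 1 - a * x := by
    calc (1 - a * x + y * x) * (1 - a * x)
        = 1 - a * x - (a * x - a * x * (a * x)) + y * (x - x * (a * x)) := by noncomm_ring
      _ = 1 - a * x := by rw [h.isIdempotentElem_mul.eq, h.inv_mul_mul_inv]; noncomm_ring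
  calc Ring.inverse (1 - a * x + y * x) * (y * x)
      = Ring.inverse (1 - a * x + y * x) * (1 - a * x + y * x)
        - Ring.inverse (1 - a * x + y * x) * ((1 - a * x + y * x) * (1 - a * x)) := by
        rw [hk_compl]; noncomm_ring
    _ = a * x := by rw [← mul_assoc, Ring.inverse_mul_cancel _ hk]; noncomm_ring

theorem exists_mul_mul_eq {y : R} (h : IsCoreInverse a x) (hy : a * x * y = y)
    (hu : IsUnit (1 - a * x + y * x)) : ∃ v, y * x * v = x := by
  obtain ⟨u, hu⟩ := hu
  have he_u : a * x * ↑u = y * x := by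
    rw [hu, mul_add, mul_sub, mul_one, h.isIdempotentElem_mul.eq, ← mul_assoc, hy, sub_self,
      zero_add]
  refine ⟨↑u⁻¹ * x, ?_⟩
  calc y * x * (↑u⁻¹ * x) = a * x * (↑u * ↑u⁻¹) * x := by rw [← he_u]; noncomm_ring
    _ = x := by rw [Units.mul_inv, mul_one, h.mul_mul_inv]

theorem unit_mul {d w : R} (h : IsCoreInverse a x) (hd : a * x * d = d) (hw : IsUnit w)
    (hk : IsUnit (1 - a * x + star w * w * d * w * x))
    (hu : IsUnit (1 - a * x + d * w * x)) :
    IsCoreInverse (w * d)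
      (w * x * Ring.inverse (1 - a * x + star w * w * d * w * x) * star w) := by
  have he_e : a * x * (a * x) = a * x := h.isIdempotentElem_mul.eq
  have hK_range := h.inverse_mul_mul_eq hk
  obtain ⟨v, hv⟩ := h.exists_mul_mul_eq (y := d * w) (by rw [← mul_assoc, hd]) hu
  have hkK := Ring.mul_inverse_cancel _ hk
  set e := a * x
  set K := Ring.inverse (1 - e + star w * w * d * w * x)
  set S := Ring.inverse (star w)
  have hSw : S * star w = 1 := Ring.inverse_mul_cancel _ hw.star
  have hwS : star w * S = 1 := Ring.mul_inverse_cancel _ hw.star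
  have hcompl_K : (1 - e) * K * star w * w * x = 0 := by
    calc (1 - e) * K * star w * w * x = (1 - e) * K * star w * w * (d * w * x * v) := by
          rw [hv]
      _ = (1 - e) * (K * (star w * w * d * w * x)) * v := by noncomm_ring
      _ = 0 := by rw [hK_range, sub_mul, one_mul, he_e, sub_self, zero_mul]
  have hby : w * d * (w * x * K * star w) = 1 - S * (1 - e) * K * star w := by
    calc w * d * (w * x * K * star w) = S * (star w * w * d * w * x) * K * star w := by
          rw [← one_mul (w * d), ← hSw]; noncomm_ring
      _ = S * ((1 - e + star w * w * d * w * x) * K) * star w - S * (1 - e) * K * star w := by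
          noncomm_ring
      _ = 1 - S * (1 - e) * K * star w := by rw [hkK, mul_one, hSw]
  refine ⟨?_, ?_, ?_⟩
  · calc w * x * K * star w * (w * d * (w * d))
        = w * x * K * star w * (w * d * (w * (x * (a * d)))) := by
          rw [h.inv_mul_mul_of_mul_mul_eq hd]
      _ = w * x * (K * (star w * w * d * w * x)) * (a * d) := by noncomm_ring
      _ = w * d := by
          rw [hK_range, mul_assoc w, h.inv_mul_mul_inv, mul_assoc, h.inv_mul_mul_of_mul_mul_eq hd]
  · calc w * d * (w * x * K * star w * (w * x * K * star w))
        = (1 - S * (1 - e) * K * star w) * (w * x * K * star w) := by rw [← hby]; noncomm_ring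
      _ = w * x * K * star w - S * ((1 - e) * K * star w * w * x) * K * star w := by noncomm_ring
      _ = w * x * K * star w := by rw [hcompl_K]; noncomm_ring
  · refine isSelfAdjoint_mul_of_star_mul_mul_eq ?_
    have hd_compl : star d * (1 - e) = 0 := by
      rw [← star_star (1 - e), ← star_mul, star_sub, star_one, h.2.2, sub_mul, one_mul, hd,
        sub_self, star_zero]
    calc star (w * d) * (w * d * (w * x * K * star w))
        = star (w * d) - star d * (star w * S) * (1 - e) * K * star w := by
          rw [hby, star_mul]; noncomm_ring
      _ = star (w * d) := by rw [hwS, mul_one, hd_compl]; noncomm_ring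

end IsCoreInverse

section Perturbation

variable {R : Type*} [Ring R]

theorem add_eq_one_add_mul_mul {a b j : R} (h : IsUnit (1 + b * j)) :
    a + j = (1 + j * b) * (a + j * Ring.inverse (1 + b * j) * (1 - b * a)) := by
  calc a + j = a + j * b * a + j * ((1 + b * j) * Ring.inverse (1 + b * j)) * (1 - b * a) := by
        rw [Ring.mul_inverse_cancel _ h]; noncomm_ring
    _ = (1 + j * b) * (a + j * Ring.inverse (1 + b * j) * (1 - b * a)) := by noncomm_ring

theorem mul_mul_add_mul_eq_self_of_sub_mul_mul_sub_eq_zero {a b t : R} (hab : a * b * a = a)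
    (h : (1 - a * b) * t * (1 - b * a) = 0) :
    a * b * (a + t * (1 - b * a)) = a + t * (1 - b * a) := by
  calc a * b * (a + t * (1 - b * a))
      = a * b * a + (t * (1 - b * a) - (1 - a * b) * t * (1 - b * a)) := by noncomm_ring
    _ = a + t * (1 - b * a) := by rw [hab, h, sub_zero]

theorem sub_mul_mul_sub_eq_zero_of_regular_add_mul {a b t z : R} (hab : a * b * a = a)
    (ht : t ∈ Ideal.jacobson (⊥ : Ideal R))
    (hz : (a + t * (1 - b * a)) * z * (a + t * (1 - b * a)) = a + t * (1 - b * a)) :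
    (1 - a * b) * t * (1 - b * a) = 0 := by
  set d := a + t * (1 - b * a) with hd
  have hd_left : (1 - a * b) * d = (1 - a * b) * t * (1 - b * a) := by
    calc (1 - a * b) * d = a - a * b * a + (1 - a * b) * t * (1 - b * a) := by
          rw [hd]; noncomm_ring
      _ = _ := by rw [hab, sub_self, zero_add]
  have hd_right : d * (1 - b * a) = t * (1 - b * a) := by
    calc d * (1 - b * a) = a - a * b * a + t * (1 - b * a - b * a + b * (a * b * a)) := by
          rw [hd]; noncomm_ring
      _ = t * (1 - b * a) := by rw [hab, sub_self, zero_add]; noncomm_ring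
  refine Ideal.eq_zero_of_eq_mul_of_mem_jacobson_bot
    (Ideal.mul_mem_right (1 - b * a) _ (Ideal.mul_mem_left _ z ht)) ?_
  calc (1 - a * b) * t * (1 - b * a) = (1 - a * b) * (d * (1 - b * a)) := by
        rw [hd_right, mul_assoc]
    _ = (1 - a * b) * (d * z * d) * (1 - b * a) := by rw [hz]; noncomm_ring
    _ = (1 - a * b) * d * z * (d * (1 - b * a)) := by noncomm_ring
    _ = (1 - a * b) * t * (1 - b * a) * (z * t * (1 - b * a)) := by
        rw [hd_left, hd_right]; noncomm_ring

theorem sub_mul_mul_inverse_mul_sub_eq_zero_of_regular_add {a ap j x : R}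
    (hj : j ∈ Ideal.jacobson (⊥ : Ideal R)) (hap : a * ap * a = a)
    (hx : (a + j) * x * (a + j) = a + j) :
    (1 - a * ap) * j * Ring.inverse (1 + ap * j) * (1 - ap * a) = 0 := by
  set w := 1 + j * ap
  set d := a + j * Ring.inverse (1 + ap * j) * (1 - ap * a)
  have hwd : a + j = w * d :=
    add_eq_one_add_mul_mul (Ideal.isUnit_one_add_of_mem_jacobson_bot (Ideal.mul_mem_left _ ap hj))
  have hw : IsUnit w := Ideal.isUnit_one_add_of_mem_jacobson_bot (Ideal.mul_mem_right ap _ hj)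
  have hd : d * (x * w) * d = d := by
    refine hw.mul_left_cancel ?_
    calc w * (d * (x * w) * d) = w * d * x * (w * d) := by noncomm_ring
      _ = w * d := by rw [← hwd, hx]
  rw [mul_assoc _ j]
  exact sub_mul_mul_sub_eq_zero_of_regular_add_mul hap (Ideal.mul_mem_right _ _ hj) hd

end Perturbation

theorem IsCoreInverse.add_of_mem_jacobson {R : Type*} [Ring R] [StarRing R] {a ac ap j j₃ : R}
    (hj : j ∈ Ideal.jacobson (⊥ : Ideal R)) (hac : IsCoreInverse a ac) (hap : a * ap * a = a)
    (hcond : (1 - a * ap) * j * Ring.inverse (1 + ap * j) * (1 - ap * a) = 0)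
    (hj₃ : star (1 + j * ap) * (a + j) * (1 + j * ap) = a + j₃) :
    IsUnit (1 + j₃ * ac) ∧
      IsCoreInverse (a + j)
        ((1 + j * ap) * ac * Ring.inverse (1 + j₃ * ac) * star (1 + j * ap)) := by
  set w := 1 + j * ap with hw_def
  set d := a + j * Ring.inverse (1 + ap * j) * (1 - ap * a) with hd_def
  have hwd : a + j = w * d :=
    add_eq_one_add_mul_mul (Ideal.isUnit_one_add_of_mem_jacobson_bot (Ideal.mul_mem_left _ ap hj))
  have hw : IsUnit w := Ideal.isUnit_one_add_of_mem_jacobson_bot (Ideal.mul_mem_right ap _ hj)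
  have hd : a * ac * d = d := hac.mul_mul_eq_of_mul_mul_eq
    (mul_mul_add_mul_eq_self_of_sub_mul_mul_sub_eq_zero hap (by simpa only [mul_assoc] using hcond))
  have hj₃_mem : j₃ ∈ Ideal.jacobson (⊥ : Ideal R) := by
    have h : j₃ = j + (a + j) * (j * ap) + star (j * ap) * (a + j) * w :=
      add_left_cancel (a := a) (by rw [← hj₃, hw_def, star_add, star_one]; noncomm_ring)
    rw [h]
    exact add_mem (add_mem hj (Ideal.mul_mem_left _ _ (Ideal.mul_mem_right _ _ hj)))
      (Ideal.mul_mem_right _ _ (Ideal.mul_mem_right _ _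
        (Ideal.star_mem_jacobson_bot (Ideal.mul_mem_right _ _ hj))))
  have hk : 1 + j₃ * ac = 1 - a * ac + star w * w * d * w * ac := by
    calc 1 + j₃ * ac = 1 - a * ac + (a + j₃) * ac := by noncomm_ring
      _ = _ := by rw [← hj₃, hwd]; noncomm_ring
  have hk_unit : IsUnit (1 + j₃ * ac) :=
    Ideal.isUnit_one_add_of_mem_jacobson_bot (Ideal.mul_mem_right _ _ hj₃_mem)
  have hu : IsUnit (1 - a * ac + d * w * ac) := by
    have h : 1 - a * ac + d * w * ac
        = 1 + (a * (j * ap) + j * Ring.inverse (1 + ap * j) * (1 - ap * a) * w) * ac := by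
      rw [hd_def, hw_def]; noncomm_ring
    rw [h]
    exact Ideal.isUnit_one_add_of_mem_jacobson_bot (Ideal.mul_mem_right _ _ (add_mem
      (Ideal.mul_mem_left _ _ (Ideal.mul_mem_right _ _ hj))
      (Ideal.mul_mem_right _ _ (Ideal.mul_mem_right _ _ (Ideal.mul_mem_right _ _ hj)))))
  refine ⟨hk_unit, ?_⟩
  rw [hwd, hk]
  exact hac.unit_mul hd hw (hk ▸ hk_unit) hu

/-- if `a` is core invertible (with core inverse `ac`), `a⁺` is a
reflexive inverse of `a` and `j` is in the Jacobson radical, then (1) `a + j` is core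
invertible ↔ (2) `a + j` is regular ↔ (3) `(1 - a a⁺) j (1 + a⁺ j)⁻¹ (1 - a⁺ a) = 0`;
in this case, with `j₃` as displayed, `1 + j₃ a⊕` is a unit and the core inverse of
`a + j` equals `(1 + j a⁺) a⊕ (1 + j₃ a⊕)⁻¹ (1 + (a⁺)* j*)`. -/
theorem stmt8 {R : Type*} [Ring R] [StarRing R] (a ac ap j : R)
    (hj : j ∈ Ideal.jacobson (⊥ : Ideal R))
    (hac : IsCoreInverse a ac)
    (hap : a * ap * a = a ∧ ap * a * ap = ap) :
    ((∃ x, IsCoreInverse (a + j) x) ↔ (∃ x, (a + j) * x * (a + j) = a + j)) ∧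
    ((∃ x, IsCoreInverse (a + j) x) ↔
      (1 - a * ap) * j * Ring.inverse (1 + ap * j) * (1 - ap * a) = 0) ∧
    ((1 - a * ap) * j * Ring.inverse (1 + ap * j) * (1 - ap * a) = 0 →
      ∀ j₃ : R, j₃ = j + a * j * ap + star ap * star j * a + j * j * ap
          + star ap * star j * j + star ap * star j * a * j * ap
          + star ap * star j * (j * j) * ap →
        IsUnit (1 + j₃ * ac) ∧
        IsCoreInverse (a + j)
          ((1 + j * ap) * ac * Ring.inverse (1 + j₃ * ac)
            * (1 + star ap * star j))) := by
  have hstar : star (1 + j * ap) = 1 + star ap * star j := by rw [star_add, star_one, star_mul]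
  have reg_of_core : (∃ x, IsCoreInverse (a + j) x) → ∃ x, (a + j) * x * (a + j) = a + j :=
    fun ⟨x, hx⟩ => ⟨x, hx.mul_mul_self⟩
  have cond_of_reg : (∃ x, (a + j) * x * (a + j) = a + j) →
      (1 - a * ap) * j * Ring.inverse (1 + ap * j) * (1 - ap * a) = 0 :=
    fun ⟨_, hx⟩ => sub_mul_mul_inverse_mul_sub_eq_zero_of_regular_add hj hap.1 hx
  have core_of_cond : (1 - a * ap) * j * Ring.inverse (1 + ap * j) * (1 - ap * a) = 0 →
      ∃ x, IsCoreInverse (a + j) x := fun hcond =>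
    ⟨_, (hac.add_of_mem_jacobson hj hap.1 hcond (j₃ := _ - a) (add_sub_cancel a _).symm).2⟩
  refine ⟨⟨reg_of_core, core_of_cond ∘ cond_of_reg⟩, ⟨cond_of_reg ∘ reg_of_core, core_of_cond⟩,
    fun hcond j₃ hj₃ => ?_⟩
  rw [← hstar]
  exact hac.add_of_mem_jacobson hj hap.1 hcond (by rw [hstar, hj₃]; noncomm_ring)
end

section
/- Let R be a ring with identity, a ∈ R and j_a ∈ J(R). Suppose a is Drazin invertible with Drazin index i(a) = k. Then the following are equivalent: (1) a + j_a is Drazin invertible; (2) (a + j_a)^l is regular for some l ≥ k; (3) there exists l ≥ k such that, with j₁ := (a + j_a)^l − a^l, one has (1 − a·a^D)·j₁·(1 + (a^D)^l·j₁)⁻¹·(1 − a^D·a) = 0. Moreover, if (3) holds for some l ≥ k with j₁ := (a + j_a)^l − a^l, then setting j := j_a + a·j₁·(a^D)^l + (a^D)^l·j₁·a + j_a·j₁·(a^D)^l + (a^D)^l·j₁·j_a + (a^D)^l·j₁·a·j₁·(a^D)^l + (a^D)^l·j₁·j_a·j₁·(a^D)^l, the element 1 + j·a^D is a unit and (a +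 j_a)^D = (1 + j₁·(a^D)^l)·a^D·(1 + j·a^D)⁻¹·(1 + (a^D)^l·j₁). -/
/-- `x` is a Drazin inverse of `a` with exponent `k`:
`a x² = x`, `x a = a x`, `x a^{k+1} = a^k`. -/
def IsDrazinInverse {R : Type*} [Ring R] (a x : R) (k : ℕ) : Prop :=
  a * (x * x) = x ∧ x * a = a * x ∧ x * a ^ (k + 1) = a ^ k


section Prelim
variable {R : Type*} [Ring R]


private lemma rml {x y z : R} (h : x * y = z) (w : R) : x * (y * w) = z * w := by
  rw [← mul_assoc, h]

private lemma inv_absorb_l {v x : R} (hv : IsUnit v) (h : x * v = x) :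
    x * Ring.inverse v = x := by
  calc x * Ring.inverse v = (x * v) * Ring.inverse v := by rw [h]
  _ = x * (v * Ring.inverse v) := by rw [mul_assoc]
  _ = x := by rw [Ring.mul_inverse_cancel _ hv, mul_one]

private lemma inv_absorb_r {v x : R} (hv : IsUnit v) (h : v * x = x) :
    Ring.inverse v * x = x := by
  calc Ring.inverse v * x = Ring.inverse v * (v * x) := by rw [h]
  _ = (Ring.inverse v * v) * x := by rw [mul_assoc]
  _ = x := by rw [Ring.inverse_mul_cancel _ hv, one_mul]

private lemma inv_comm {v x : R} (hv : IsUnit v) (h : v * x = x * v) :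
    Ring.inverse v * x = x * Ring.inverse v := by
  calc Ring.inverse v * x
      = Ring.inverse v * (x * (v * Ring.inverse v)) := by
        rw [Ring.mul_inverse_cancel _ hv, mul_one]
  _ = Ring.inverse v * ((v * x) * Ring.inverse v) := by
        rw [← mul_assoc x v (Ring.inverse v), ← h]
  _ = ((Ring.inverse v * v) * x) * Ring.inverse v := by rw [← mul_assoc, ← mul_assoc]
  _ = x * Ring.inverse v := by rw [Ring.inverse_mul_cancel _ hv, one_mul]

private lemma unit_swap {a b : R} (h : IsUnit (1 + a * b)) : IsUnit (1 + b * a) := by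
  obtain ⟨u, hu⟩ := h
  have h1 : (1 + a * b) * ↑u⁻¹ = 1 := by rw [← hu]; exact u.mul_inv
  have h2 : (↑u⁻¹ : R) * (1 + a * b) = 1 := by rw [← hu]; exact u.inv_mul
  set c : R := ↑u⁻¹ with hc
  have e1 : (1 + a * b) * (c * a) = a := by rw [← mul_assoc, h1, one_mul]
  have k1 : (1 + b * a) * (1 - b * (c * a)) = 1 := by
    have e : (1 + b * a) * (1 - b * (c * a))
        = 1 + b * a - b * ((1 + a * b) * (c * a)) := by noncomm_ring
    rw [e, e1]; noncomm_ring
  have k2 : (1 - b * (c * a)) * (1 + b * a) = 1 := by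
    have e : (1 - b * (c * a)) * (1 + b * a)
        = 1 + b * a - b * ((c * (1 + a * b)) * a) := by noncomm_ring
    rw [e, h2, one_mul]; noncomm_ring
  exact ⟨⟨1 + b * a, 1 - b * (c * a), k1, k2⟩, rfl⟩

private lemma junit_right {x : R} (hx : x ∈ Ideal.jacobson (⊥ : Ideal R)) (y : R) :
    IsUnit (1 + y * x) := by
  have H := Ideal.mem_jacobson_iff.1 hx
  obtain ⟨z, hz⟩ := H y
  rw [Ideal.mem_bot] at hz
  have hA : z * y * x + z = 1 := by
    have := sub_eq_zero.mp hz; exact this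
  have hz1 : z * (1 + y * x) = 1 := by
    have e : z * (1 + y * x) = z * y * x + z := by noncomm_ring
    rw [e, hA]
  have hzf : z = 1 + (-(z * y)) * x := by
    have e : 1 + (-(z * y)) * x = 1 - z * y * x := by noncomm_ring
    rw [e, ← hA]; noncomm_ring
  obtain ⟨z2, hz2⟩ := H (-(z * y))
  rw [Ideal.mem_bot] at hz2
  have hA2 : z2 * -(z * y) * x + z2 = 1 := sub_eq_zero.mp hz2
  have hz2' : z2 * z = 1 := by
    have e : z2 * (1 + -(z * y) * x) = z2 * -(z * y) * x + z2 := by noncomm_ring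
    rw [← hzf] at e; rw [e, hA2]
  have hfin : z2 = 1 + y * x := by
    calc z2 = z2 * (z * (1 + y * x)) := by rw [hz1, mul_one]
    _ = z2 * z * (1 + y * x) := by rw [mul_assoc]
    _ = 1 + y * x := by rw [hz2', one_mul]
  refine ⟨⟨1 + y * x, z, ?_, hz1⟩, rfl⟩
  rw [← hfin]; exact hfin ▸ hz2'

private lemma junit {x : R} (hx : x ∈ Ideal.jacobson (⊥ : Ideal R)) : IsUnit (1 + x) := by
  simpa using junit_right hx 1

private lemma jmul_right {x : R} (hx : x ∈ Ideal.jacobson (⊥ : Ideal R)) (r : R) :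
    x * r ∈ Ideal.jacobson (⊥ : Ideal R) := by
  rw [Ideal.mem_jacobson_iff]
  intro y
  have h1 : IsUnit (1 + r * (y * x)) := by
    have := junit_right hx (r * y); rwa [← mul_assoc]
  have h2 : IsUnit (1 + (y * x) * r) := unit_swap h1
  obtain ⟨u, hu⟩ := h2
  refine ⟨↑u⁻¹, ?_⟩
  rw [Ideal.mem_bot]
  have key : (↑u⁻¹ : R) * (1 + y * x * r) = 1 := by rw [← hu]; exact u.inv_mul
  have e : (↑u⁻¹ : R) * y * (x * r) + ↑u⁻¹ - 1
      = ↑u⁻¹ * (1 + y * x * r) - 1 := by noncomm_ring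
  rw [e, key, sub_self]


end Prelim

section Core
variable {R : Type*} [Ring R]

private lemma core (a ad ja : R) (k l : ℕ) (hl : 1 ≤ l) (hkl : k ≤ l)
    (hja : ja ∈ Ideal.jacobson (⊥ : Ideal R))
    (had : IsDrazinInverse a ad k) :
    ((∃ u, (a + ja) ^ l * u * (a + ja) ^ l = (a + ja) ^ l) →
      (1 - a * ad) * ((a + ja) ^ l - a ^ l) * Ring.inverse (1 + ad ^ l * ((a + ja) ^ l - a ^ l)) * (1 - ad * a) = 0)
  ∧ ((1 - a * ad) * ((a + ja) ^ l - a ^ l) * Ring.inverse (1 + ad ^ l * ((a + ja) ^ l - a ^ l)) * (1 - ad * a) = 0 →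
      IsUnit (1 + (ja + a * ((a + ja) ^ l - a ^ l) * ad ^ l + ad ^ l * ((a + ja) ^ l - a ^ l) * a + ja * ((a + ja) ^ l - a ^ l) * ad ^ l + ad ^ l * ((a + ja) ^ l - a ^ l) * ja + ad ^ l * ((a + ja) ^ l - a ^ l) * a * ((a + ja) ^ l - a ^ l) * ad ^ l + ad ^ l * ((a + ja) ^ l - a ^ l) * ja * ((a + ja) ^ l - a ^ l) * ad ^ l) * ad) ∧
      IsDrazinInverse (a + ja)
        ((1 + ((a + ja) ^ l - a ^ l) * ad ^ l) * ad * Ring.inverse (1 + (ja + a * ((a + ja) ^ l - a ^ l) * ad ^ l + ad ^ l * ((a + ja) ^ l - a ^ l) * a + ja * ((a + ja) ^ l - a ^ l) * ad ^ l + ad ^ l * ((a + ja) ^ l - a ^ l) * ja + ad ^ l * ((a + ja) ^ l - a ^ l) * a * ((a + ja) ^ l - a ^ l) * ad ^ l + ad ^ l * ((a + ja) ^ l - a ^ l) * ja * ((a + ja) ^ l - a ^ l) * ad ^ l) * ad) * (1 + ad ^ l * ((a + ja) ^ l - a ^ l)))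
        (2 * l - 1)) := by
  obtain ⟨had1, had2, had3⟩ := had
  rw [show ad * a = a * ad from had2]
  have hcomm : Commute a ad := had2.symm
  -- raw facts
  have hpad : (a * ad) * ad = ad := by rw [mul_assoc]; exact had1
  have hadp : ad * (a * ad) = ad := by rw [← mul_assoc, had2, mul_assoc]; exact had1
  have hpp : (a * ad) * (a * ad) = a * ad := by rw [mul_assoc, hadp]
  have hpa : (a * ad) * a = a * (a * ad) := by rw [mul_assoc, had2, ← mul_assoc, mul_assoc]
  have hppow : ∀ n : ℕ, (a * ad) ^ (n + 1) = a * ad := by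
    intro n; induction n with
    | zero => rw [pow_one]
    | succ m ih => rw [pow_succ, ih, hpp]
  have hgh : a ^ l * ad ^ l = a * ad := by
    rw [← Commute.mul_pow hcomm]
    have := hppow (l - 1); rwa [show l - 1 + 1 = l by omega] at this
  have hhg : ad ^ l * a ^ l = a * ad := by
    rw [← Commute.mul_pow hcomm.symm, had2]
    have := hppow (l - 1); rwa [show l - 1 + 1 = l by omega] at this
  have hgp : a ^ l * (a * ad) = a ^ l := by
    have hkp : a ^ k * (a * ad) = a ^ k := by
      have h1 : a ^ k * (a * ad) = a ^ (k + 1) * ad := by rw [← mul_assoc, ← pow_succ]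
      have h2 : a ^ (k + 1) * ad = ad * a ^ (k + 1) := (hcomm.pow_left (k + 1)).eq
      rw [h1, h2, had3]
    have e : a ^ l = a ^ (l - k) * a ^ k := by rw [← pow_add]; congr 1; omega
    rw [e, mul_assoc, hkp]
  have hcommpa : Commute (a * ad) a := hpa
  have hpg : (a * ad) * a ^ l = a ^ l := by
    rw [(hcommpa.pow_right l).eq, hgp]
  have hadl1 : ad * ad ^ (l - 1) = ad ^ l := by rw [← pow_succ']; congr 1; omega
  have hadl2 : ad ^ (l - 1) * ad = ad ^ l := by rw [← pow_succ]; congr 1; omega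
  have hph : (a * ad) * ad ^ l = ad ^ l := by
    rw [← hadl1, ← mul_assoc, hpad, hadl1]
  have hhp : ad ^ l * (a * ad) = ad ^ l := by
    rw [← hadl2, mul_assoc, hadp, hadl2]
  -- now abstract
  set b := a + ja with hbdef
  set g := a ^ l with hgdef
  set c := b ^ l with hcdef
  set p := a * ad with hpdef
  set E := (1 : R) - p with hEdef
  set h := ad ^ l with hhdef
  set j1 := c - g with hj1def
  clear_value b g c p E h j1
  -- E facts
  have hEp : E * p = 0 := by rw [hEdef, sub_mul, one_mul, hpp, sub_self]
  have hpE : p * E = 0 := by rw [hEdef, mul_sub, mul_one, hpp, sub_self]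
  have hEE : E * E = E := by nth_rewrite 2 [hEdef]; rw [mul_sub, mul_one, hEp, sub_zero]
  have hEad : E * ad = 0 := by rw [hEdef, sub_mul, one_mul, hpad, sub_self]
  have hadE : ad * E = 0 := by rw [hEdef, mul_sub, mul_one, hadp, sub_self]
  have hEh : E * h = 0 := by rw [hEdef, sub_mul, one_mul, hph, sub_self]
  have hhE : h * E = 0 := by rw [hEdef, mul_sub, mul_one, hhp, sub_self]
  have hEg : E * g = 0 := by rw [hEdef, sub_mul, one_mul, hpg, sub_self]
  have hgE : g * E = 0 := by rw [hEdef, mul_sub, mul_one, hgp, sub_self]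
  have hpmE : p + E = 1 := by rw [hEdef]; abel
  -- Jacobson radical membership
  have hj1J : j1 ∈ Ideal.jacobson (⊥ : Ideal R) := by
    rw [hj1def, hcdef, hgdef, hbdef]
    have : ∀ n : ℕ, (a + ja) ^ n - a ^ n ∈ Ideal.jacobson (⊥ : Ideal R) := by
      intro n; induction n with
      | zero => simp
      | succ n ih =>
        have e : (a + ja) ^ (n + 1) - a ^ (n + 1)
            = ((a + ja) ^ n - a ^ n) * (a + ja) + a ^ n * ja := by
          rw [pow_succ, pow_succ]; noncomm_ring
        rw [e]
        exact add_mem (jmul_right ih (a + ja)) (Ideal.mul_mem_left _ _ hja)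
    exact this l
  -- Peirce components
  set pi1 := p * (j1 * p) with hpi1def
  set be := p * (j1 * E) with hbedef
  set ga := E * (j1 * p) with hgadef
  set de := E * (j1 * E) with hdedef
  clear_value pi1 be ga de
  have hdecomp : j1 = pi1 + be + ga + de := by
    rw [hpi1def, hbedef, hgadef, hdedef, hEdef]; noncomm_ring
  have hbeJ : be ∈ Ideal.jacobson (⊥ : Ideal R) := by
    rw [hbedef]; exact Ideal.mul_mem_left _ _ (jmul_right hj1J E)
  have hgaJ : ga ∈ Ideal.jacobson (⊥ : Ideal R) := by
    rw [hgadef]; exact Ideal.mul_mem_left _ _ (jmul_right hj1J p)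
  have hdeJ : de ∈ Ideal.jacobson (⊥ : Ideal R) := by
    rw [hdedef]; exact Ideal.mul_mem_left _ _ (jmul_right hj1J E)
  have hpi1J : pi1 ∈ Ideal.jacobson (⊥ : Ideal R) := by
    rw [hpi1def]; exact Ideal.mul_mem_left _ _ (jmul_right hj1J p)
  -- absorption laws
  have hppi1 : p * pi1 = pi1 := by rw [hpi1def, ← mul_assoc, hpp]
  have hpi1p : pi1 * p = pi1 := by rw [hpi1def, mul_assoc, mul_assoc, hpp]
  have hEpi1 : E * pi1 = 0 := by rw [hpi1def, ← mul_assoc, hEp, zero_mul]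
  have hpi1E : pi1 * E = 0 := by rw [hpi1def, mul_assoc, mul_assoc, hpE, mul_zero, mul_zero]
  have hpbe : p * be = be := by rw [hbedef, ← mul_assoc, hpp]
  have hbep : be * p = 0 := by rw [hbedef, mul_assoc, mul_assoc, hEp, mul_zero, mul_zero]
  have hEbe : E * be = 0 := by rw [hbedef, ← mul_assoc, hEp, zero_mul]
  have hbeE : be * E = be := by rw [hbedef, mul_assoc, mul_assoc, hEE]
  have hpga : p * ga = 0 := by rw [hgadef, ← mul_assoc, hpE, zero_mul]
  have hgap : ga * p = ga := by rw [hgadef, mul_assoc, mul_assoc, hpp]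
  have hEga : E * ga = ga := by rw [hgadef, ← mul_assoc, hEE]
  have hgaE : ga * E = 0 := by rw [hgadef, mul_assoc, mul_assoc, hpE, mul_zero, mul_zero]
  have hpde : p * de = 0 := by rw [hdedef, ← mul_assoc, hpE, zero_mul]
  have hdep : de * p = 0 := by rw [hdedef, mul_assoc, mul_assoc, hEp, mul_zero, mul_zero]
  have hEde : E * de = de := by rw [hdedef, ← mul_assoc, hEE]
  have hdeE : de * E = de := by rw [hdedef, mul_assoc, mul_assoc, hEE]
  have hhga : h * ga = 0 := by rw [hgadef, ← mul_assoc, hhE, zero_mul]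
  have hhde : h * de = 0 := by rw [hdedef, ← mul_assoc, hhE, zero_mul]
  have hbeh : be * h = 0 := by rw [hbedef, mul_assoc, mul_assoc, hEh, mul_zero, mul_zero]
  have hdeh : de * h = 0 := by rw [hdedef, mul_assoc, mul_assoc, hEh, mul_zero, mul_zero]
  -- alpha' layer
  have hhpi1J : h * pi1 ∈ Ideal.jacobson (⊥ : Ideal R) := Ideal.mul_mem_left _ _ hpi1J
  have hpi1hJ : pi1 * h ∈ Ideal.jacobson (⊥ : Ideal R) := jmul_right hpi1J h
  have hwu : IsUnit (1 + h * pi1) := junit hhpi1J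
  have hw'u : IsUnit (1 + pi1 * h) := junit hpi1hJ
  set w := Ring.inverse (1 + h * pi1) with hwdef
  set w' := Ring.inverse (1 + pi1 * h) with hw'def
  have huw : (1 + h * pi1) * w = 1 := by rw [hwdef]; exact Ring.mul_inverse_cancel _ hwu
  have hwu2 : w * (1 + h * pi1) = 1 := by rw [hwdef]; exact Ring.inverse_mul_cancel _ hwu
  have huw' : (1 + pi1 * h) * w' = 1 := by rw [hw'def]; exact Ring.mul_inverse_cancel _ hw'u
  have hEv : E * (1 + h * pi1) = E := by
    rw [mul_add, mul_one, ← mul_assoc, hEh, zero_mul, add_zero]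
  have hEw : E * w = E := by rw [hwdef]; exact inv_absorb_l hwu hEv
  have hvE : (1 + h * pi1) * E = E := by
    rw [add_mul, one_mul, mul_assoc, hpi1E, mul_zero, add_zero]
  have hwE : w * E = E := by rw [hwdef]; exact inv_absorb_r hwu hvE
  have hE'v : E * (1 + pi1 * h) = E := by
    rw [mul_add, mul_one, ← mul_assoc, hEpi1, zero_mul, add_zero]
  have hEw' : E * w' = E := by rw [hw'def]; exact inv_absorb_l hw'u hE'v
  have hvp : (1 + h * pi1) * p = p * (1 + h * pi1) := by
    rw [add_mul, mul_add, one_mul, mul_one, mul_assoc, hpi1p, ← mul_assoc, hph]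
  have hwp : w * p = p * w := by rw [hwdef]; exact inv_comm hwu hvp
  have hwh : w * h = h * w' := by
    have base : (1 + h * pi1) * h = h * (1 + pi1 * h) := by
      rw [add_mul, mul_add, one_mul, mul_one, mul_assoc]
    calc w * h = (w * h) * ((1 + pi1 * h) * w') := by rw [huw', mul_one]
    _ = (w * ((1 + h * pi1) * h)) * w' := by
        rw [mul_assoc w h _, ← mul_assoc h _ w', ← base, ← mul_assoc, ← mul_assoc]
    _ = ((w * (1 + h * pi1)) * h) * w' := by rw [← mul_assoc]
    _ = h * w' := by rw [hwu2, one_mul]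
  set a' := w * h with ha'def
  have ha'2 : a' = h * w' := hwh
  clear_value a'
  have hpa' : p * a' = a' := by rw [ha'def, ← mul_assoc, ← hwp, mul_assoc, hph]
  have ha'p : a' * p = a' := by rw [ha'def, mul_assoc, hhp]
  have hEa' : E * a' = 0 := by rw [ha'def, ← mul_assoc, hEw, hEh]
  have ha'E : a' * E = 0 := by rw [ha'def, mul_assoc, hhE, mul_zero]
  set al := g + pi1 with haldef
  have hpal : p * al = al := by rw [haldef, mul_add, hpg, hppi1]
  have halp : al * p = al := by rw [haldef, add_mul, hgp, hpi1p]
  have hEal : E * al = 0 := by rw [haldef, mul_add, hEg, hEpi1, add_zero]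
  have halE : al * E = 0 := by rw [haldef, add_mul, hgE, hpi1E, add_zero]
  have h1mE : (1:R) - E = p := by rw [hEdef]; abel
  have ha'al : a' * al = p := by
    rw [ha'def, haldef, mul_add, mul_assoc, hhg, mul_assoc w h pi1, ← mul_add]
    have e : p + h * pi1 = (1 + h * pi1) - E := by rw [hEdef]; abel
    rw [e, mul_sub, hwu2, hwE, h1mE]
  have hala' : al * a' = p := by
    rw [ha'2, haldef, add_mul, ← mul_assoc, hgh, ← mul_assoc, ← add_mul]
    have e : p + pi1 * h = (1 + pi1 * h) - E := by rw [hEdef]; abel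
    rw [e, sub_mul, huw', hEw', h1mE]
  clear_value al
  -- cross absorptions
  have hbeal : be * al = 0 := by rw [← hpal, ← mul_assoc, hbep, zero_mul]
  have halga : al * ga = 0 := by rw [hgadef, ← mul_assoc, halE, zero_mul]
  have hbea' : be * a' = 0 := by rw [← hpa', ← mul_assoc, hbep, zero_mul]
  have ha'ga : a' * ga = 0 := by rw [hgadef, ← mul_assoc, ha'E, zero_mul]
  have hdea' : de * a' = 0 := by rw [← hpa', ← mul_assoc, hdep, zero_mul]
  -- D layer
  set Dd := h * ad with hDdef
  have hgD : g * Dd = ad := by rw [hDdef, ← mul_assoc, hgh, hpad]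
  have hpD : p * Dd = Dd := by rw [hDdef, ← mul_assoc, hph]
  have hED : E * Dd = 0 := by rw [hDdef, ← mul_assoc, hEh, zero_mul]
  have hDE : Dd * E = 0 := by rw [hDdef, mul_assoc, hadE, mul_zero]
  have hDp : Dd * p = Dd := by rw [hDdef, mul_assoc, hadp]
  clear_value Dd
  have hbeD : be * Dd = 0 := by rw [← hbeE, mul_assoc, hED, mul_zero]
  have hdeD : de * Dd = 0 := by rw [← hdeE, mul_assoc, hED, mul_zero]
  -- T layer
  set T := be * (ga * (a' * a')) with hTdef
  have hTJ : T ∈ Ideal.jacobson (⊥ : Ideal R) := by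
    rw [hTdef]; exact jmul_right hbeJ _
  have hVu : IsUnit (1 + T) := junit hTJ
  set V := Ring.inverse (1 + T) with hVdef
  have hpT : p * T = T := by rw [hTdef, ← mul_assoc, hpbe]
  have hTp : T * p = T := by
    simp only [hTdef, mul_assoc]; rw [ha'p]
  have hET : E * T = 0 := by rw [hTdef, ← mul_assoc, hEbe, zero_mul]
  have hTE : T * E = 0 := by
    simp only [hTdef, mul_assoc]; rw [ha'E, mul_zero, mul_zero, mul_zero]
  have hEuT : E * (1 + T) = E := by rw [mul_add, mul_one, hET, add_zero]
  have hEV : E * V = E := by rw [hVdef]; exact inv_absorb_l hVu hEuT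
  have huTE : (1 + T) * E = E := by rw [add_mul, one_mul, hTE, add_zero]
  have hVE : V * E = E := by rw [hVdef]; exact inv_absorb_r hVu huTE
  have huTp : (1 + T) * p = p * (1 + T) := by
    rw [add_mul, mul_add, one_mul, mul_one, hpT, hTp]
  have hVp : V * p = p * V := by rw [hVdef]; exact inv_comm hVu huTp
  have h1Tal : (1 + T) * al = al + be * (ga * a') := by
    rw [add_mul, one_mul]
    have e : T * al = be * (ga * a') := by
      simp only [hTdef, mul_assoc]; rw [ha'al, ha'p]
    rw [e]
  set A' := a' * V with hA'def
  have hpA' : p * A' = A' := by rw [hA'def, ← mul_assoc, hpa']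
  have hA'p : A' * p = A' := by rw [hA'def, mul_assoc, hVp, ← mul_assoc, ha'p]
  have hEA' : E * A' = 0 := by rw [hA'def, ← mul_assoc, hEa', zero_mul]
  have hA'E : A' * E = 0 := by rw [hA'def, mul_assoc, hVE, ha'E]
  have hbeA' : be * A' = 0 := by rw [hA'def, ← mul_assoc, hbea', zero_mul]
  set Ab := al + be * (ga * a') with hAbdef
  have hVAb : V * Ab = al := by
    rw [← h1Tal, ← mul_assoc, hVdef, Ring.inverse_mul_cancel _ hVu, one_mul]
  have hA'Ab : A' * Ab = p := by rw [hA'def, mul_assoc, hVAb, ha'al]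
  have hAbA' : Ab * A' = p := by
    rw [← h1Tal, hA'def, mul_assoc, ← mul_assoc al a' V, hala', ← hVp,
      ← mul_assoc, hVdef, Ring.mul_inverse_cancel _ hVu, one_mul]
  clear_value A'
  -- M, N layer
  set M := 1 + ga * a' with hMdef
  set N := 1 + a' * be with hNdef
  have halN : al * N = al + be := by
    rw [hNdef, mul_add, mul_one, ← mul_assoc, hala', hpbe]
  have hANM : (al * N) * M = Ab + be := by
    rw [halN, hMdef, mul_add, mul_one, add_mul, ← mul_assoc al ga a', halga, zero_mul,
      zero_add, hAbdef]
    abel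
  have hAbbeA' : (Ab + be) * A' = p := by rw [add_mul, hAbA', hbeA', add_zero]
  -- sigma layer
  set sg := de - ga * (a' * be) with hsgdef
  have hsgJ : sg ∈ Ideal.jacobson (⊥ : Ideal R) := by
    rw [hsgdef]; exact sub_mem hdeJ (jmul_right hgaJ _)
  have hEsg : E * sg = sg := by rw [hsgdef, mul_sub, hEde, ← mul_assoc, hEga]
  have hsgE : sg * E = sg := by
    rw [hsgdef, sub_mul, hdeE]
    have e : (ga * (a' * be)) * E = ga * (a' * be) := by
      simp only [mul_assoc]; rw [hbeE]
    rw [e]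
  have hcgj : c = al + be + ga + de := by
    have h1 : c = g + j1 := by rw [hj1def]; abel
    rw [h1, hdecomp, haldef]; abel
  have hMalN : M * (al * N) = al + be + ga + ga * (a' * be) := by
    rw [halN, hMdef, add_mul, one_mul, mul_add (ga * a') al be, mul_assoc ga a' al, ha'al,
      hgap, mul_assoc ga a' be]
    abel
  have hcMN : c = M * (al * N) + sg := by
    rw [hMalN, hsgdef, hcgj]; abel
  -- t layer and identity (E)
  set t := 1 + h * j1 with htdef
  set s1 := 1 + j1 * h with hs1def
  have htu : IsUnit t := by rw [htdef]; exact junit (Ideal.mul_mem_left _ _ hj1J)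
  have hj1E : j1 * E = be + de := by
    rw [hdecomp, add_mul, add_mul, add_mul, hpi1E, hbeE, hgaE, hdeE]; abel
  have htE : t * E = E + h * be := by
    rw [htdef, add_mul, one_mul, mul_assoc, hj1E, mul_add, hhde, add_zero]
  have hj1a' : j1 * a' = pi1 * a' + ga * a' := by
    rw [hdecomp, add_mul, add_mul, add_mul, hbea', hdea']; abel
  have hta' : t * a' = h := by
    rw [htdef, add_mul, one_mul, mul_assoc, hj1a', mul_add, ← mul_assoc h ga a', hhga,
      zero_mul, add_zero, ← mul_assoc h pi1 a']
    have e : a' + h * pi1 * a' = (1 + h * pi1) * a' := by rw [add_mul, one_mul]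
    rw [e, ha'def, ← mul_assoc, huw, one_mul]
  have htEab : t * (E - a' * be) = E := by
    rw [mul_sub, htE, ← mul_assoc, hta']; abel
  have hinvtE : Ring.inverse t * E = E - a' * be := by
    calc Ring.inverse t * E = Ring.inverse t * (t * (E - a' * be)) := by rw [htEab]
    _ = (Ring.inverse t * t) * (E - a' * be) := by rw [mul_assoc]
    _ = E - a' * be := by rw [Ring.inverse_mul_cancel _ htu, one_mul]
  have hEident : E * j1 * Ring.inverse t * E = sg := by
    rw [mul_assoc (E * j1) _ E, hinvtE, mul_sub, mul_assoc E j1 E, hj1E,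
      mul_add E be de, hEbe, hEde, zero_add]
    have e2 : E * j1 * (a' * be) = ga * (a' * be) := by
      rw [mul_assoc E j1 _, ← mul_assoc j1 a' be, hj1a', add_mul, mul_add,
        ← mul_assoc E (pi1 * a') be, ← mul_assoc E pi1 a', hEpi1, zero_mul, zero_mul,
        zero_add, ← mul_assoc E (ga * a') be, ← mul_assoc E ga a', hEga, mul_assoc]
    rw [e2, hsgdef]
  -- inverses of M and N
  set Mi := (1 : R) - ga * a' with hMidef
  set Ni := (1 : R) - a' * be with hNidef
  have hgaga : (ga * a') * (ga * a') = 0 := by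
    rw [mul_assoc ga a' _, ← mul_assoc a' ga a', ha'ga, zero_mul, mul_zero]
  have hbebe : (a' * be) * (a' * be) = 0 := by
    rw [mul_assoc a' be _, ← mul_assoc be a' be, hbea', zero_mul, mul_zero]
  have hMMi : M * Mi = 1 := by
    rw [hMdef, hMidef]
    have e : (1 + ga * a') * (1 - ga * a') = 1 - (ga * a') * (ga * a') := by noncomm_ring
    rw [e, hgaga, sub_zero]
  have hMiM : Mi * M = 1 := by
    rw [hMdef, hMidef]
    have e : (1 - ga * a') * (1 + ga * a') = 1 - (ga * a') * (ga * a') := by noncomm_ring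
    rw [e, hgaga, sub_zero]
  have hNNi : N * Ni = 1 := by
    rw [hNdef, hNidef]
    have e : (1 + a' * be) * (1 - a' * be) = 1 - (a' * be) * (a' * be) := by noncomm_ring
    rw [e, hbebe, sub_zero]
  have hNiN : Ni * N = 1 := by
    rw [hNdef, hNidef]
    have e : (1 - a' * be) * (1 + a' * be) = 1 - (a' * be) * (a' * be) := by noncomm_ring
    rw [e, hbebe, sub_zero]
  clear_value M N Mi Ni
  -- part B : regularity of c implies sg = 0
  have hregsg : (∃ u, c * u * c = c) → sg = 0 := by
    rintro ⟨u, hu⟩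
    set d := Mi * (c * Ni) with hddef
    have hsga' : sg * a' = 0 := by rw [← hsgE, mul_assoc, hEa', mul_zero]
    have ha'sg : a' * sg = 0 := by rw [← hEsg, ← mul_assoc, ha'E, zero_mul]
    have hd : d = al + sg := by
      have e1 : c * Ni = M * (al * N) * Ni + sg := by
        rw [hcMN, add_mul]
        have e2 : sg * Ni = sg := by
          rw [hNidef, mul_sub, mul_one, ← mul_assoc, hsga', zero_mul, sub_zero]
        rw [e2]
      have e3 : M * (al * N) * Ni = M * al := by
        rw [mul_assoc, mul_assoc al N Ni, hNNi, mul_one]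
      rw [hddef, e1, e3, mul_add, ← mul_assoc, hMiM, one_mul]
      have e4 : Mi * sg = sg := by
        rw [hMidef, sub_mul, one_mul, mul_assoc, ha'sg, mul_zero, sub_zero]
      rw [e4]
    have hEd : E * d = sg := by rw [hd, mul_add, hEal, hEsg, zero_add]
    have hdE : d * E = sg := by rw [hd, add_mul, halE, hsgE, zero_add]
    have hdXd : d * ((N * (u * M)) * d) = d := by
      rw [hddef]
      calc Mi * (c * Ni) * ((N * (u * M)) * (Mi * (c * Ni)))
          = Mi * (c * ((Ni * N) * (u * ((M * Mi) * (c * Ni))))) := by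
            simp only [mul_assoc]
      _ = Mi * (c * (u * (c * Ni))) := by rw [hNiN, hMMi, one_mul, one_mul]
      _ = Mi * ((c * u * c) * Ni) := by simp only [mul_assoc]
      _ = Mi * (c * Ni) := by rw [hu]
    have hsgXsg : sg * ((N * (u * M)) * sg) = sg := by
      nth_rewrite 2 [← hdE]
      nth_rewrite 1 [← hEd]
      calc (E * d) * ((N * (u * M)) * (d * E))
          = E * ((d * ((N * (u * M)) * d)) * E) := by simp only [mul_assoc]
      _ = E * (d * E) := by rw [hdXd]
      _ = sg := by rw [hdE, hEsg]
    have h5 : sg * (1 - (N * (u * M)) * sg) = 0 := by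
      rw [mul_sub, mul_one, hsgXsg, sub_self]
    have hUu : IsUnit (1 - (N * (u * M)) * sg) := by
      rw [sub_eq_add_neg]; exact junit (neg_mem (Ideal.mul_mem_left _ _ hsgJ))
    obtain ⟨U, hU⟩ := hUu
    calc sg = sg * (↑U * ↑U⁻¹) := by rw [Units.mul_inv, mul_one]
    _ = (sg * ↑U) * ↑U⁻¹ := by rw [mul_assoc]
    _ = 0 := by rw [hU, h5, zero_mul]
  -- part C : machinery under sg = 0
  have hkeyC : ∀ _hsg0 : sg = 0,
      ∃ x0 q : R, (q * (s1 * ad) = s1 * ad) ∧ (q * (E - a' * be) = 0) ∧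
        (x0 * q = x0) ∧ (x0 * b = q) ∧
        (b * (x0 * x0) = x0) ∧ (x0 * b = b * x0) ∧
        (x0 * b ^ (2 * l - 1 + 1) = b ^ (2 * l - 1)) := by
    intro hsg0
    have hcM : c = M * (al * N) := by rw [hcMN, hsg0, add_zero]
    set y := M * (A' * (A' * (al * N))) with hydef
    set q := M * (A' * (al * N)) with hqdef
    have hAbbeal : (Ab + be) * (al * N) = Ab * (al * N) := by
      rw [add_mul, ← mul_assoc be al N, hbeal, zero_mul, add_zero]
    have hyc : y * c = q := by
      rw [hydef, hcM, hqdef]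
      calc (M * (A' * (A' * (al * N)))) * (M * (al * N))
          = M * (A' * (A' * (((al * N) * M) * (al * N)))) := by simp only [mul_assoc]
      _ = M * (A' * (A' * (Ab * (al * N)))) := by rw [hANM, hAbbeal]
      _ = M * (A' * (p * (al * N))) := by rw [← mul_assoc A' Ab _, hA'Ab]
      _ = M * (A' * (al * N)) := by rw [← mul_assoc p al N, hpal]
    have hcy : c * y = q := by
      rw [hydef, hcM, hqdef]
      calc (M * (al * N)) * (M * (A' * (A' * (al * N))))
          = M * (((al * N) * M) * (A' * (A' * (al * N)))) := by simp only [mul_assoc]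
      _ = M * (((Ab + be) * A') * (A' * (al * N))) := by
            rw [hANM, ← mul_assoc (Ab + be) A' _]
      _ = M * (p * (A' * (al * N))) := by rw [hAbbeA']
      _ = M * (A' * (al * N)) := by rw [← mul_assoc p A' _, hpA']
    have hqy : q * y = y := by
      rw [hydef, hqdef]
      calc (M * (A' * (al * N))) * (M * (A' * (A' * (al * N))))
          = M * (A' * (((al * N) * M) * (A' * (A' * (al * N))))) := by simp only [mul_assoc]
      _ = M * (A' * (((Ab + be) * A') * (A' * (al * N)))) := by
            rw [hANM, ← mul_assoc (Ab + be) A' _]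
      _ = M * (A' * (p * (A' * (al * N)))) := by rw [hAbbeA']
      _ = M * (A' * (A' * (al * N))) := by rw [← mul_assoc p A' _, hpA']
    have hqc : q * c = c := by
      rw [hqdef, hcM]
      calc (M * (A' * (al * N))) * (M * (al * N))
          = M * (A' * (((al * N) * M) * (al * N))) := by simp only [mul_assoc]
      _ = M * (A' * (Ab * (al * N))) := by rw [hANM, hAbbeal]
      _ = M * (p * (al * N)) := by rw [← mul_assoc A' Ab _, hA'Ab]
      _ = M * (al * N) := by rw [← mul_assoc p al N, hpal]
    clear_value y q
    have hcyy : c * (y * y) = y := by rw [← mul_assoc, hcy, hqy]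
    have hycc : y * (c * c) = c := by rw [← mul_assoc, hyc, hqc]
    have hcq : c * q = c := by rw [← hyc, ← mul_assoc, hcy, hqc]
    have hbc : b * c = c * b := by rw [hcdef]; exact ((Commute.refl b).pow_right l).eq
    have hqb : q * b = b * q := by
      have h2 : q * b = (y * b) * c := by rw [← hyc, mul_assoc, ← hbc, ← mul_assoc]
      have h3 : b * q = c * (b * y) := by rw [← hcy, ← mul_assoc, hbc, mul_assoc]
      have e1 : (q * b) * q = q * b := by rw [h2, mul_assoc, hcq]
      have e2 : q * (b * q) = b * q := by rw [h3, ← mul_assoc, hqc]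
      have e3 : (q * b) * q = q * (b * q) := mul_assoc q b q
      rw [e1, e2] at e3; exact e3
    have hyq : y * q = y := by rw [← hcy, ← mul_assoc, hyc, hqy]
    have hyb : y * b = b * y := by
      calc y * b = (y * q) * b := by rw [hyq]
      _ = y * (q * b) := mul_assoc y q b
      _ = y * (b * q) := by rw [hqb]
      _ = y * (b * (c * y)) := by rw [← hcy]
      _ = y * ((b * c) * y) := by rw [← mul_assoc b c y]
      _ = y * ((c * b) * y) := by rw [hbc]
      _ = (y * c) * (b * y) := by simp only [mul_assoc]
      _ = q * (b * y) := by rw [hyc]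
      _ = (q * b) * y := by rw [mul_assoc]
      _ = (b * q) * y := by rw [hqb]
      _ = b * (q * y) := mul_assoc b q y
      _ = b * y := by rw [hqy]
    have hbl1 : b ^ (l - 1) * b = c := by rw [hcdef, ← pow_succ]; congr 1; omega
    have hbb : b * b ^ (l - 1) = b ^ (l - 1) * b := ((Commute.refl b).pow_right (l - 1)).eq
    have hyB : Commute y b := hyb
    have hybl : y * b ^ (l - 1) = b ^ (l - 1) * y := (hyB.pow_right (l - 1)).eq
    have hcbl : c * b ^ (l - 1) = b ^ (l - 1) * c := by
      rw [hcdef]; exact pow_mul_comm b l (l - 1)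
    refine ⟨b ^ (l - 1) * y, q, ?_, ?_, ?_, ?_, ?_, ?_, ?_⟩
    · -- q * (s1 * ad) = s1 * ad
      have hs1ad : s1 * ad = (al + ga) * Dd := by
        rw [hs1def, add_mul, one_mul, mul_assoc, ← hDdef]
        have e : j1 * Dd = pi1 * Dd + ga * Dd := by
          rw [hdecomp, add_mul, add_mul, add_mul, hbeD, hdeD]; abel
        rw [e, add_mul al ga Dd, haldef, add_mul g pi1 Dd, hgD]; abel
      have hNX : N * ((al + ga) * Dd) = (al + ga) * Dd + a' * (be * (ga * Dd)) := by
        rw [hNdef, add_mul, one_mul, mul_assoc a' be _]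
        have e : be * ((al + ga) * Dd) = be * (ga * Dd) := by
          rw [add_mul al ga Dd, mul_add be, ← mul_assoc be al Dd, hbeal, zero_mul, zero_add]
        rw [e]
      have halX : al * (N * ((al + ga) * Dd)) = al * (al * Dd) + be * (ga * Dd) := by
        rw [hNX, mul_add]
        have e1 : al * ((al + ga) * Dd) = al * (al * Dd) := by
          rw [add_mul al ga Dd, mul_add al, ← mul_assoc al ga Dd, halga, zero_mul, add_zero]
        have e2 : al * (a' * (be * (ga * Dd))) = be * (ga * Dd) := by
          rw [← mul_assoc al a' _, hala', ← mul_assoc p be _, hpbe]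
        rw [e1, e2]
      have hAbalD : Ab * (al * Dd) = al * (al * Dd) + be * (ga * Dd) := by
        rw [hAbdef, add_mul]
        have e : (be * (ga * a')) * (al * Dd) = be * (ga * Dd) := by
          simp only [mul_assoc]
          rw [← mul_assoc a' al Dd, ha'al, hpD]
        rw [e]
      rw [hs1ad, hqdef]
      calc (M * (A' * (al * N))) * ((al + ga) * Dd)
          = M * (A' * (al * (N * ((al + ga) * Dd)))) := by simp only [mul_assoc]
      _ = M * (A' * (Ab * (al * Dd))) := by rw [halX, ← hAbalD]
      _ = M * (p * (al * Dd)) := by rw [← mul_assoc A' Ab _, hA'Ab]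
      _ = M * (al * Dd) := by rw [← mul_assoc p al Dd, hpal]
      _ = (al + ga) * Dd := by
          rw [hMdef, add_mul, one_mul, add_mul al ga Dd]
          congr 1
          rw [← mul_assoc (ga * a') al Dd, mul_assoc ga a' al, ha'al, hgap]
    · -- q * (E - a' * be) = 0
      have hkey0 : (al * N) * (E - a' * be) = 0 := by
        rw [mul_sub]
        have e1 : (al * N) * E = be := by rw [halN, add_mul, halE, hbeE, zero_add]
        have e2 : (al * N) * (a' * be) = be := by
          rw [halN, add_mul, ← mul_assoc al a' be, hala', hpbe, ← mul_assoc be a' be,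
            hbea', zero_mul, add_zero]
        rw [e1, e2, sub_self]
      rw [hqdef]
      calc (M * (A' * (al * N))) * (E - a' * be)
          = M * (A' * ((al * N) * (E - a' * be))) := by simp only [mul_assoc]
      _ = 0 := by rw [hkey0, mul_zero, mul_zero]
    · -- x0 * q = x0
      rw [mul_assoc, hyq]
    · -- x0 * b = q
      rw [mul_assoc, hyb, ← mul_assoc, hbl1, hcy]
    · -- b * (x0 * x0) = x0
      calc b * ((b ^ (l - 1) * y) * (b ^ (l - 1) * y))
          = b * (b ^ (l - 1) * ((y * b ^ (l - 1)) * y)) := by simp only [mul_assoc]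
      _ = b * (b ^ (l - 1) * ((b ^ (l - 1) * y) * y)) := by rw [hybl]
      _ = (b * b ^ (l - 1)) * (b ^ (l - 1) * (y * y)) := by simp only [mul_assoc]
      _ = (b ^ (l - 1) * b) * (b ^ (l - 1) * (y * y)) := by rw [hbb]
      _ = c * (b ^ (l - 1) * (y * y)) := by rw [hbl1]
      _ = (c * b ^ (l - 1)) * (y * y) := by rw [mul_assoc]
      _ = (b ^ (l - 1) * c) * (y * y) := by rw [hcbl]
      _ = b ^ (l - 1) * (c * (y * y)) := by rw [mul_assoc]
      _ = b ^ (l - 1) * y := by rw [hcyy]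
    · -- x0 * b = b * x0
      rw [mul_assoc, hyb, ← mul_assoc, ← hbb, mul_assoc]
    · -- x0 * b ^ (2l-1+1) = b ^ (2l-1)
      have e1 : b ^ (2 * l - 1 + 1) = c * c := by rw [hcdef, ← pow_add]; congr 1; omega
      have e2 : b ^ (2 * l - 1) = b ^ (l - 1) * c := by rw [hcdef, ← pow_add]; congr 1; omega
      rw [e1, e2, mul_assoc, hycc]
  -- final assembly
  set jj := ja + a * j1 * h + h * j1 * a + ja * j1 * h + h * j1 * ja + h * j1 * a * j1 * h
      + h * j1 * ja * j1 * h with hjjdef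
  constructor
  · intro hreg
    rw [hEident]
    exact hregsg hreg
  · intro hC3
    have hsg0 : sg = 0 := hEident.symm.trans hC3
    obtain ⟨x0, q, hqsad, hqEab, hx0q, hx0b, hax1, hax2, hax3⟩ := hkeyC hsg0
    have hjjJ : jj ∈ Ideal.jacobson (⊥ : Ideal R) := by
      rw [hjjdef]
      refine add_mem (add_mem (add_mem (add_mem (add_mem (add_mem hja ?_) ?_) ?_) ?_) ?_) ?_
      · exact jmul_right (Ideal.mul_mem_left _ a hj1J) h
      · exact jmul_right (Ideal.mul_mem_left _ h hj1J) a
      · exact jmul_right (Ideal.mul_mem_left _ ja hj1J) h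
      · exact jmul_right (Ideal.mul_mem_left _ h hj1J) ja
      · exact jmul_right (Ideal.mul_mem_left _ (h * j1 * a) hj1J) h
      · exact jmul_right (Ideal.mul_mem_left _ (h * j1 * ja) hj1J) h
    have hu1u : IsUnit (1 + jj * ad) := junit (jmul_right hjjJ ad)
    have htbs : (1 : R) + jj * ad = E + t * (b * (s1 * ad)) := by
      rw [hjjdef, htdef, hs1def, hbdef, hEdef, hpdef]; noncomm_ring
    have hx0tu : x0 * (Ring.inverse t * (1 + jj * ad)) = s1 * ad := by
      have e1 : Ring.inverse t * (1 + jj * ad) = (E - a' * be) + b * (s1 * ad) := by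
        rw [htbs, mul_add, hinvtE, ← mul_assoc, Ring.inverse_mul_cancel _ htu, one_mul]
      rw [e1, mul_add]
      have e2 : x0 * (E - a' * be) = 0 := by
        rw [← hx0q, mul_assoc, hqEab, mul_zero]
      have e3 : x0 * (b * (s1 * ad)) = s1 * ad := by
        rw [← mul_assoc, hx0b, hqsad]
      rw [e2, e3, zero_add]
    have hX : s1 * ad * Ring.inverse (1 + jj * ad) * t = x0 := by
      rw [← hx0tu]
      calc (x0 * (Ring.inverse t * (1 + jj * ad))) * Ring.inverse (1 + jj * ad) * t
          = x0 * (Ring.inverse t * (((1 + jj * ad) * Ring.inverse (1 + jj * ad)) * t)) := by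
            simp only [mul_assoc]
      _ = x0 * (Ring.inverse t * t) := by rw [Ring.mul_inverse_cancel _ hu1u, one_mul]
      _ = x0 := by rw [Ring.inverse_mul_cancel _ htu, mul_one]
    exact ⟨hu1u, by rw [hX]; exact ⟨hax1, hax2, hax3⟩⟩

private lemma reg_of_drazin (b x : R) (m k : ℕ) (hx : IsDrazinInverse b x m) :
    ∃ l, k ≤ l ∧ ∃ u, b ^ l * u * b ^ l = b ^ l := by
  obtain ⟨h1, h2, h3⟩ := hx
  have hcom : Commute x b := h2
  refine ⟨max k m, le_max_left _ _, x ^ (max k m), ?_⟩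
  set L := max k m with hL
  have hstep : ∀ n, m ≤ n → x * b ^ (n + 1) = b ^ n := by
    intro n hn
    have e : b ^ (n + 1) = b ^ (m + 1) * b ^ (n - m) := by rw [← pow_add]; congr 1; omega
    rw [e, ← mul_assoc, h3, ← pow_add]; congr 1; omega
  have hiter : ∀ i, x ^ i * b ^ (L + i) = b ^ L := by
    intro i; induction i with
    | zero => simp
    | succ i ih =>
      have e0 : L + (i + 1) = (L + i) + 1 := by omega
      have e : x ^ (i + 1) * b ^ (L + (i + 1)) = x ^ i * (x * b ^ ((L + i) + 1)) := by
        rw [pow_succ, e0, mul_assoc]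
      rw [e, hstep (L + i) (by omega), ih]
  calc b ^ L * x ^ L * b ^ L = x ^ L * b ^ L * b ^ L := by
        rw [(hcom.pow_pow L L).eq]
  _ = x ^ L * b ^ (L + L) := by rw [mul_assoc, ← pow_add]
  _ = b ^ L := hiter L

private lemma unit_case (a ad ja : R) (hja : ja ∈ Ideal.jacobson (⊥ : Ideal R))
    (had : IsDrazinInverse a ad 0) :
    IsDrazinInverse (a + ja) (ad * Ring.inverse (1 + ja * ad)) 0 := by
  obtain ⟨h1, h2, h3⟩ := had
  have hada : ad * a = 1 := by simpa using h3
  have haad : a * ad = 1 := by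
    calc a * ad = a * (ad * 1) := by rw [mul_one]
    _ = a * (ad * (ad * a)) := by rw [hada]
    _ = (a * (ad * ad)) * a := by simp only [mul_assoc]
    _ = ad * a := by rw [h1]
    _ = 1 := hada
  have hvu : IsUnit (1 + ja * ad) := junit (jmul_right hja ad)
  have hbfac : a + ja = (1 + ja * ad) * a := by
    rw [add_mul, one_mul, mul_assoc, hada, mul_one]
  have hxb : (ad * Ring.inverse (1 + ja * ad)) * (a + ja) = 1 := by
    rw [hbfac]
    calc (ad * Ring.inverse (1 + ja * ad)) * ((1 + ja * ad) * a)
        = ad * ((Ring.inverse (1 + ja * ad) * (1 + ja * ad)) * a) := by simp only [mul_assoc]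
    _ = ad * a := by rw [Ring.inverse_mul_cancel _ hvu, one_mul]
    _ = 1 := hada
  have hbx : (a + ja) * (ad * Ring.inverse (1 + ja * ad)) = 1 := by
    rw [hbfac]
    calc ((1 + ja * ad) * a) * (ad * Ring.inverse (1 + ja * ad))
        = (1 + ja * ad) * ((a * ad) * Ring.inverse (1 + ja * ad)) := by simp only [mul_assoc]
    _ = (1 + ja * ad) * Ring.inverse (1 + ja * ad) := by rw [haad, one_mul]
    _ = 1 := Ring.mul_inverse_cancel _ hvu
  refine ⟨?_, ?_, ?_⟩
  · calc (a + ja) * ((ad * Ring.inverse (1 + ja * ad)) * (ad * Ring.inverse (1 + ja * ad)))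
        = ((a + ja) * (ad * Ring.inverse (1 + ja * ad))) * (ad * Ring.inverse (1 + ja * ad)) := by
          rw [← mul_assoc]
    _ = ad * Ring.inverse (1 + ja * ad) := by rw [hbx, one_mul]
  · rw [hxb, hbx]
  · rw [pow_one, pow_zero, hxb]

end Core

/-- if `a` is Drazin invertible with Drazin index `k` (Drazin inverse `ad`)
and `j_a` is in the Jacobson radical, then (1) `a + j_a` is Drazin invertible ↔
(2) `(a + j_a)^l` is regular for some `l ≥ k` ↔ (3) the displayed equation holds for
some `l ≥ k`; moreover if (3) holds for `l ≥ k`, then with `j₁ = (a+j_a)^l - a^l` and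
`j` as displayed, `1 + j a^D` is a unit and
`(a + j_a)^D = (1 + j₁ (a^D)^l) a^D (1 + j a^D)⁻¹ (1 + (a^D)^l j₁)`. -/
theorem stmt9 {R : Type*} [Ring R] (a ad ja : R) (k : ℕ)
    (hja : ja ∈ Ideal.jacobson (⊥ : Ideal R))
    (had : IsDrazinInverse a ad k)
    (hmin : ∀ m : ℕ, (∃ x, IsDrazinInverse a x m) → k ≤ m) :
    ((∃ x m, IsDrazinInverse (a + ja) x m) ↔
      (∃ l, k ≤ l ∧ ∃ u, (a + ja) ^ l * u * (a + ja) ^ l = (a + ja) ^ l)) ∧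
    ((∃ x m, IsDrazinInverse (a + ja) x m) ↔
      (∃ l, k ≤ l ∧
        (1 - a * ad) * ((a + ja) ^ l - a ^ l)
          * Ring.inverse (1 + ad ^ l * ((a + ja) ^ l - a ^ l)) * (1 - ad * a) = 0)) ∧
    (∀ l, k ≤ l → ∀ j₁ : R, j₁ = (a + ja) ^ l - a ^ l →
      (1 - a * ad) * j₁ * Ring.inverse (1 + ad ^ l * j₁) * (1 - ad * a) = 0 →
      ∀ j : R, j = ja + a * j₁ * ad ^ l + ad ^ l * j₁ * a + ja * j₁ * ad ^ l
          + ad ^ l * j₁ * ja + ad ^ l * j₁ * a * j₁ * ad ^ l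
          + ad ^ l * j₁ * ja * j₁ * ad ^ l →
        IsUnit (1 + j * ad) ∧
        ∃ m, IsDrazinInverse (a + ja)
          ((1 + j₁ * ad ^ l) * ad * Ring.inverse (1 + j * ad) * (1 + ad ^ l * j₁)) m) := by

  have P12 : (∃ x m, IsDrazinInverse (a + ja) x m) →
      (∃ l, k ≤ l ∧ ∃ u, (a + ja) ^ l * u * (a + ja) ^ l = (a + ja) ^ l) := by
    rintro ⟨x, m, hx⟩
    exact reg_of_drazin (a + ja) x m k hx
  have Punit : k = 0 → ∃ x m, IsDrazinInverse (a + ja) x m := by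
    intro hk0
    subst hk0
    exact ⟨_, 0, unit_case a ad ja hja had⟩
  have P21 : (∃ l, k ≤ l ∧ ∃ u, (a + ja) ^ l * u * (a + ja) ^ l = (a + ja) ^ l) →
      (∃ x m, IsDrazinInverse (a + ja) x m) := by
    rintro ⟨l, hkl, hreg⟩
    by_cases hl : 1 ≤ l
    · obtain ⟨hp1, hp2⟩ := core a ad ja k l hl hkl hja had
      obtain ⟨hu, hdraz⟩ := hp2 (hp1 hreg)
      exact ⟨_, 2 * l - 1, hdraz⟩
    · exact Punit (by omega)
  have P13 : (∃ x m, IsDrazinInverse (a + ja) x m) →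
      (∃ l, k ≤ l ∧
        (1 - a * ad) * ((a + ja) ^ l - a ^ l)
          * Ring.inverse (1 + ad ^ l * ((a + ja) ^ l - a ^ l)) * (1 - ad * a) = 0) := by
    intro hd
    obtain ⟨l, hkl, hreg⟩ := P12 hd
    by_cases hl : 1 ≤ l
    · exact ⟨l, hkl, (core a ad ja k l hl hkl hja had).1 hreg⟩
    · refine ⟨l, hkl, ?_⟩
      have hl0 : l = 0 := by omega
      subst hl0
      simp
  have P31 : (∃ l, k ≤ l ∧
        (1 - a * ad) * ((a + ja) ^ l - a ^ l)
          * Ring.inverse (1 + ad ^ l * ((a + ja) ^ l - a ^ l)) * (1 - ad * a) = 0) →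
      (∃ x m, IsDrazinInverse (a + ja) x m) := by
    rintro ⟨l, hkl, hC3⟩
    by_cases hl : 1 ≤ l
    · obtain ⟨hu, hdraz⟩ := (core a ad ja k l hl hkl hja had).2 hC3
      exact ⟨_, 2 * l - 1, hdraz⟩
    · exact Punit (by omega)
  refine ⟨⟨P12, P21⟩, ⟨P13, P31⟩, ?_⟩
  intro l hkl j₁ hj₁ hC3 j hj
  subst hj₁
  subst hj
  by_cases hl : 1 ≤ l
  · obtain ⟨hp1, hp2⟩ := core a ad ja k l hl hkl hja had
    obtain ⟨hu, hdraz⟩ := hp2 hC3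
    exact ⟨hu, 2 * l - 1, hdraz⟩
  · have hl0 : l = 0 := by omega
    subst hl0
    have hk0 : k = 0 := by omega
    subst hk0
    simp only [pow_zero, sub_self, mul_zero, zero_mul, add_zero, mul_one, one_mul]
    exact ⟨junit (jmul_right hja ad), 0, unit_case a ad ja hja had⟩
end

section
/- Let R be a ring with identity, a, b, c ∈ R and j_a ∈ J(R). Suppose a^{‖(b,c)} exists and let b⁺ and c⁺ be reflexive inverses of b and c. Then (a + j_a)^{‖(b,c)} exists, and the following are equivalent: (1) (a + j_a)^{‖(b,c)} is idempotent; (2) (a^{‖(b,c)})² = a^{‖(b,c)}·(a + j_a)·a^{‖(b,c)}; (3) a + j_a = c⁺·c·b·b⁺ + (1 − c⁺·c)·(a + j_a) + c⁺·c·(a + j_a)·(1 − b·b⁺). -/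
/-- If `j` is in the Jacobson radical, `r*j + 1` is a (two-sided) unit. -/
lemma jac_unit {R : Type*} [Ring R] {j : R} (hj : j ∈ Ideal.jacobson (⊥ : Ideal R)) (r : R) :
    ∃ w : R, (r * j + 1) * w = 1 ∧ w * (r * j + 1) = 1 := by
  obtain ⟨z, hz⟩ := Ideal.mem_jacobson_iff.1 hj r
  rw [Ideal.mem_bot] at hz
  have hz1 : z * (r * j + 1) = 1 := by
    rw [← sub_eq_zero, show z * (r * j + 1) - 1 = z * r * j + z - 1 from by noncomm_ring, hz]
  have hmem : -(z * r * j) ∈ Ideal.jacobson (⊥ : Ideal R) :=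
    neg_mem (Ideal.mul_mem_left _ (z * r) hj)
  obtain ⟨z2, hz2⟩ := Ideal.mem_jacobson_iff.1 hmem 1
  rw [Ideal.mem_bot] at hz2
  have hz3 : z2 * z = 1 := by
    rw [← sub_eq_zero]
    have e : z2 * z - 1 = (z2 * 1 * -(z * r * j) + z2 - 1) + z2 * (z * r * j + z - 1) := by
      noncomm_ring
    rw [e, hz2, hz, mul_zero, add_zero]
  have hz4 : z2 = r * j + 1 := by
    calc z2 = z2 * (z * (r * j + 1)) := by rw [hz1, mul_one]
      _ = (z2 * z) * (r * j + 1) := by rw [mul_assoc]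
      _ = r * j + 1 := by rw [hz3, one_mul]
  exact ⟨z, by rw [← hz4]; exact hz3, hz1⟩

/-- if `a^{‖(b,c)}` exists (say it is `y`), `b⁺, c⁺` are reflexive
inverses of `b, c` and `j_a` is in the Jacobson radical, then `(a + j_a)^{‖(b,c)}`
exists, and it is idempotent iff `(a^{‖(b,c)})² = a^{‖(b,c)} (a + j_a) a^{‖(b,c)}`
iff `a + j_a = c⁺ c b b⁺ + (1 - c⁺ c)(a + j_a) + c⁺ c (a + j_a)(1 - b b⁺)`. -/
theorem stmt11 {R : Type*} [Ring R] (a b c y bp cp ja : R)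
    (hja : ja ∈ Ideal.jacobson (⊥ : Ideal R))
    (hy : IsBCInverse a b c y)
    (hbp : b * bp * b = b ∧ bp * b * bp = bp)
    (hcp : c * cp * c = c ∧ cp * c * cp = cp) :
    (∃ z, IsBCInverse (a + ja) b c z) ∧
    (∀ z, IsBCInverse (a + ja) b c z →
      (IsIdempotentElem z ↔ y * y = y * (a + ja) * y) ∧
      (IsIdempotentElem z ↔
        a + ja = cp * c * b * bp + (1 - cp * c) * (a + ja)
          + cp * c * (a + ja) * (1 - b * bp))) := by
  obtain ⟨hc, hb, ⟨s, hs⟩, ⟨t, ht⟩⟩ := hy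
  obtain ⟨w, hw1, hw2⟩ := jac_unit hja y
  -- hw1 : (y*ja+1)*w = 1, hw2 : w*(y*ja+1) = 1
  have yay : y * a * y = y := by
    calc y * a * y = y * a * (b * s) := by rw [← hs]
      _ = (y * a * b) * s := by noncomm_ring
      _ = b * s := by rw [hb]
      _ = y := hs.symm
  have f1 : (ja * y + 1) * (1 - ja * w * y) = 1 := by
    calc (ja * y + 1) * (1 - ja * w * y)
        = 1 + ja * y - ja * ((y * ja + 1) * w) * y := by noncomm_ring
      _ = 1 := by rw [hw1]; noncomm_ring
  have f2 : (1 - ja * w * y) * (ja * y + 1) = 1 := by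
    calc (1 - ja * w * y) * (ja * y + 1)
        = 1 + ja * y - ja * (w * (y * ja + 1)) * y := by noncomm_ring
      _ = 1 := by rw [hw2]; noncomm_ring
  have f3 : w * y = y * (1 - ja * w * y) := by
    have e : w * y - y * (1 - ja * w * y) = ((y * ja + 1) * w - 1) * y := by noncomm_ring
    have h0 : (y * ja + 1) * w - 1 = 0 := by rw [hw1, sub_self]
    rw [← sub_eq_zero, e, h0, zero_mul]
  have E1 : c * (a + ja) * (w * y) = c := by
    calc c * (a + ja) * (w * y)
        = c * (a + ja) * (y * (1 - ja * w * y)) := by rw [f3]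
      _ = (c * a * y + c * ja * y) * (1 - ja * w * y) := by noncomm_ring
      _ = (c + c * ja * y) * (1 - ja * w * y) := by rw [hc]
      _ = c * ((ja * y + 1) * (1 - ja * w * y)) := by noncomm_ring
      _ = c := by rw [f1, mul_one]
  have E2 : w * y * (a + ja) * b = b := by
    calc w * y * (a + ja) * b
        = w * (y * a * b + y * ja * b) := by noncomm_ring
      _ = w * (b + y * ja * b) := by rw [hb]
      _ = (w * (y * ja + 1)) * b := by noncomm_ring
      _ = b := by rw [hw2, one_mul]
  have Ez : IsBCInverse (a + ja) b c (w * y) := by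
    refine ⟨E1, E2, ⟨s * (1 - ja * w * y), ?_⟩, ⟨w * t, ?_⟩⟩
    · calc w * y = y * (1 - ja * w * y) := f3
        _ = (b * s) * (1 - ja * w * y) := by rw [← hs]
        _ = b * (s * (1 - ja * w * y)) := by rw [mul_assoc]
    · calc w * y = w * (t * c) := by rw [← ht]
        _ = (w * t) * c := by rw [mul_assoc]
  refine ⟨⟨w * y, Ez⟩, ?_⟩
  intro z hz
  obtain ⟨hc', hb', ⟨s', hs'⟩, ⟨t', ht'⟩⟩ := hz
  -- uniqueness : z = w*y
  have e1 : w * y * (a + ja) * z = z := by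
    calc w * y * (a + ja) * z = w * y * (a + ja) * (b * s') := by rw [← hs']
      _ = (w * y * (a + ja) * b) * s' := by noncomm_ring
      _ = b * s' := by rw [E2]
      _ = z := hs'.symm
  have e2 : w * y * (a + ja) * z = w * y := by
    have e : w * y * (a + ja) * z - w * y = w * t * (c * (a + ja) * z - c) + (w * y - w * (t * c)) * (a + ja) * z - (w * y - w * (t * c)) := by
      noncomm_ring
    have h0 : w * y - w * (t * c) = 0 := by rw [← ht, sub_self]
    have h1 : c * (a + ja) * z - c = 0 := by rw [hc', sub_self]
    rw [← sub_eq_zero, e, h0, h1, mul_zero, zero_mul, zero_mul, sub_zero, add_zero]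
  have zeq : z = w * y := e1.symm.trans e2
  -- facts about z
  have uz : (y * ja + 1) * z = y := by rw [zeq, ← mul_assoc, hw1, one_mul]
  have zv : z * (ja * y + 1) = y := by rw [zeq, f3, mul_assoc, f2, mul_one]
  have key : (y * ja + 1) * (z * z) * (ja * y + 1) = y * y := by
    calc (y * ja + 1) * (z * z) * (ja * y + 1)
        = ((y * ja + 1) * z) * (z * (ja * y + 1)) := by noncomm_ring
      _ = y * y := by rw [uz, zv]
  have key2 : (y * ja + 1) * z * (ja * y + 1) = y * (a + ja) * y := by
    calc (y * ja + 1) * z * (ja * y + 1) = y * (ja * y + 1) := by rw [uz]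
      _ = y * ja * y + y * a * y := by rw [yay]; noncomm_ring
      _ = y * (a + ja) * y := by noncomm_ring
  have sandwich : ∀ p : R, w * ((y * ja + 1) * p * (ja * y + 1)) * (1 - ja * w * y) = p := by
    intro p
    calc w * ((y * ja + 1) * p * (ja * y + 1)) * (1 - ja * w * y)
        = (w * (y * ja + 1)) * (p * ((ja * y + 1) * (1 - ja * w * y))) := by noncomm_ring
      _ = 1 * (p * 1) := by rw [hw2, f1]
      _ = p := by rw [one_mul, mul_one]
  have iff12 : IsIdempotentElem z ↔ y * y = y * (a + ja) * y := by
    constructor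
    · intro h
      have h' : z * z = z := h
      calc y * y = (y * ja + 1) * (z * z) * (ja * y + 1) := key.symm
        _ = (y * ja + 1) * z * (ja * y + 1) := by rw [h']
        _ = y * (a + ja) * y := key2
    · intro h
      show z * z = z
      calc z * z = w * ((y * ja + 1) * (z * z) * (ja * y + 1)) * (1 - ja * w * y) :=
            (sandwich _).symm
        _ = w * (y * y) * (1 - ja * w * y) := by rw [key]
        _ = w * (y * (a + ja) * y) * (1 - ja * w * y) := by rw [h]
        _ = w * ((y * ja + 1) * z * (ja * y + 1)) * (1 - ja * w * y) := by rw [key2]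
        _ = z := sandwich z
  -- part (3)
  have g1 : b * bp * z = z := by
    calc b * bp * z = b * bp * (b * s') := by rw [← hs']
      _ = (b * bp * b) * s' := by noncomm_ring
      _ = b * s' := by rw [hbp.1]
      _ = z := hs'.symm
  have g2 : z * (cp * c) = z := by
    calc z * (cp * c) = (t' * c) * (cp * c) := by rw [← ht']
      _ = t' * (c * cp * c) := by noncomm_ring
      _ = t' * c := by rw [hcp.1]
      _ = z := ht'.symm
  have g3 : cp * c * (a + ja) * z = cp * c := by
    have e : cp * c * (a + ja) * z - cp * c = cp * (c * (a + ja) * z - c) := by noncomm_ring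
    have h0 : c * (a + ja) * z - c = 0 := by rw [hc', sub_self]
    rw [← sub_eq_zero, e, h0, mul_zero]
  have g4 : z * (a + ja) * (b * bp) = b * bp := by
    have e : z * (a + ja) * (b * bp) - b * bp = (z * (a + ja) * b - b) * bp := by noncomm_ring
    have h0 : z * (a + ja) * b - b = 0 := by rw [hb', sub_self]
    rw [← sub_eq_zero, e, h0, zero_mul]
  have g5 : z * (a + ja) * z = z := by
    calc z * (a + ja) * z = z * (a + ja) * (b * s') := by rw [← hs']
      _ = (z * (a + ja) * b) * s' := by noncomm_ring
      _ = b * s' := by rw [hb']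
      _ = z := hs'.symm
  have iff1h3 : IsIdempotentElem z ↔ cp * c * (a + ja) * (b * bp) = cp * c * (b * bp) := by
    constructor
    · intro h
      have h' : z * z = z := h
      calc cp * c * (a + ja) * (b * bp)
          = cp * c * (a + ja) * (z * (a + ja) * (b * bp)) := by rw [g4]
        _ = cp * c * (a + ja) * ((z * z) * (a + ja) * (b * bp)) := by rw [h']
        _ = (cp * c * (a + ja) * z) * (z * (a + ja) * (b * bp)) := by noncomm_ring
        _ = (cp * c) * (z * (a + ja) * (b * bp)) := by rw [g3]
        _ = cp * c * (b * bp) := by rw [g4]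
    · intro h
      show z * z = z
      calc z * z = (z * (cp * c)) * ((b * bp) * z) := by rw [g2, g1]
        _ = z * (cp * c * (b * bp)) * z := by noncomm_ring
        _ = z * (cp * c * (a + ja) * (b * bp)) * z := by rw [h]
        _ = (z * (cp * c)) * (a + ja) * ((b * bp) * z) := by noncomm_ring
        _ = z * (a + ja) * z := by rw [g2, g1]
        _ = z := g5
  have iff3 : (a + ja = cp * c * b * bp + (1 - cp * c) * (a + ja)
        + cp * c * (a + ja) * (1 - b * bp))
      ↔ cp * c * (a + ja) * (b * bp) = cp * c * (b * bp) := by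
    have e : cp * c * (a + ja) * (b * bp) - cp * c * (b * bp)
        = (a + ja) - (cp * c * b * bp + (1 - cp * c) * (a + ja)
          + cp * c * (a + ja) * (1 - b * bp)) := by noncomm_ring
    constructor
    · intro h
      rw [← sub_eq_zero, e]
      exact sub_eq_zero.2 h
    · intro h
      rw [← sub_eq_zero, ← e]
      exact sub_eq_zero.2 h
  exact ⟨iff12, iff1h3.trans iff3.symm⟩
end

section
/- Let R be a ring with identity, a, b, c ∈ R and j_a ∈ J(R), and let b⁺ and c⁺ be reflexive inverses of b and c. Then the following are equivalent: (1) a^{‖(b,c)} exists and both a^{‖(b,c)} and (a + j_a)^{‖(b,c)} are idempotent; (2) the (b,c)-inverse 1^{‖(b,c)} of 1 exists, a = c⁺·c·b·b⁺ + (1 − c⁺·c)·a + c⁺·c·a·(1 − b·b⁺), and j_a = (1 − c⁺·c)·j_a + c⁺·c·j_a·(1 − b·b⁺). In this case, a^{‖(b,c)} = (a + j_a)^{‖(b,c)} = 1^{‖(b,c)}. -/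
lemma bc_unique {R : Type*} [Ring R] {a b c y y' : R}
    (h : IsBCInverse a b c y) (h' : IsBCInverse a b c y') : y = y' := by
  obtain ⟨hcy, hyb, _, ⟨t, ht⟩⟩ := h
  obtain ⟨hcy', hyb', ⟨s', hs'⟩, _⟩ := h'
  have e1 : y * a * y' = y := by
    calc y * a * y' = t * (c * a * y') := by rw [ht]; noncomm_ring
      _ = t * c := by rw [hcy']
      _ = y := ht.symm
  have e2 : y * a * y' = y' := by
    calc y * a * y' = (y * a * b) * s' := by rw [hs']; noncomm_ring
      _ = b * s' := by rw [hyb]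
      _ = y' := hs'.symm
  rw [← e1, e2]

lemma bc_refl {R : Type*} [Ring R] {a b c y : R}
    (h : IsBCInverse a b c y) : y * a * y = y := by
  obtain ⟨_, hyb, ⟨s, hs⟩, _⟩ := h
  calc y * a * y = (y * a * b) * s := by rw [hs]; noncomm_ring
    _ = b * s := by rw [hyb]
    _ = y := hs.symm

/-- If `y` is an idempotent (b,c)-inverse of `a`, it is a (b,c)-inverse of `1`. -/
lemma bc_one_of_idem {R : Type*} [Ring R] {a b c y : R}
    (h : IsBCInverse a b c y) (hy : IsIdempotentElem y) : IsBCInverse 1 b c y := by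
  obtain ⟨hcy, hyb, hb, hc⟩ := h
  have hy' : y * y = y := hy
  refine ⟨?_, ?_, hb, hc⟩
  · rw [mul_one]
    calc c * y = (c * a * y) * y := by rw [hcy]
      _ = c * a * (y * y) := by noncomm_ring
      _ = c * a * y := by rw [hy']
      _ = c := hcy
  · rw [mul_one]
    calc y * b = y * (y * a * b) := by rw [hyb]
      _ = (y * y) * a * b := by noncomm_ring
      _ = y * a * b := by rw [hy']
      _ = b := hyb

/-- If `e` is a (b,c)-inverse of `1` and `a` satisfies the structural equation,
then `e` is a (b,c)-inverse of `a`. -/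
lemma bc_of_one {R : Type*} [Ring R] {a b c bp cp e : R}
    (hbp1 : b * bp * b = b) (hcp1 : c * cp * c = c)
    (he : IsBCInverse 1 b c e)
    (ha : a = cp * c * b * bp + (1 - cp * c) * a + cp * c * a * (1 - b * bp)) :
    IsBCInverse a b c e := by
  obtain ⟨hce, heb, hbmem, hcmem⟩ := he
  rw [mul_one] at hce
  rw [mul_one] at heb
  obtain ⟨s, hs⟩ := hbmem
  obtain ⟨t, ht⟩ := hcmem
  have f1 : b * bp * e = e := by
    rw [hs]
    calc b * bp * (b * s) = (b * bp * b) * s := by noncomm_ring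
      _ = b * s := by rw [hbp1]
  have f2 : e * cp * c = e := by
    rw [ht]
    calc t * c * cp * c = t * (c * cp * c) := by noncomm_ring
      _ = t * c := by rw [hcp1]
  have g1 : (1 - b * bp) * e = 0 := by
    have : (1 - b * bp) * e = e - b * bp * e := by noncomm_ring
    rw [this, f1, sub_self]
  have g2 : e * (1 - cp * c) = 0 := by
    have : e * (1 - cp * c) = e - e * cp * c := by noncomm_ring
    rw [this, f2, sub_self]
  have g3 : c * (1 - cp * c) = 0 := by
    have : c * (1 - cp * c) = c - c * cp * c := by noncomm_ring
    rw [this, hcp1, sub_self]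
  have g4 : (1 - b * bp) * b = 0 := by
    have : (1 - b * bp) * b = b - b * bp * b := by noncomm_ring
    rw [this, hbp1, sub_self]
  refine ⟨?_, ?_, ⟨s, hs⟩, ⟨t, ht⟩⟩
  · -- c * a * e = c
    calc c * a * e
        = (c * cp * c) * (b * bp * e) + (c * (1 - cp * c)) * (a * e)
            + (c * cp * c) * (a * ((1 - b * bp) * e)) := by
          conv_lhs => rw [ha]
          noncomm_ring
      _ = c * e + 0 * (a * e) + c * (a * 0) := by rw [hcp1, f1, g1, g3]
      _ = c * e := by noncomm_ring
      _ = c := hce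
  · -- e * a * b = b
    calc e * a * b
        = (e * cp * c) * (b * bp * b) + (e * (1 - cp * c)) * (a * b)
            + (e * cp * c) * (a * ((1 - b * bp) * b)) := by
          conv_lhs => rw [ha]
          noncomm_ring
      _ = e * b + 0 * (a * b) + e * (a * 0) := by rw [f2, hbp1, g2, g4]
      _ = e * b := by noncomm_ring
      _ = b := heb

/-- `a^{‖(b,c)}` exists and both `a^{‖(b,c)}` and `(a + j_a)^{‖(b,c)}`
are idempotents iff `1^{‖(b,c)}` exists, `a = c⁺ c b b⁺ + (1 - c⁺ c) a + c⁺ c a (1 - b b⁺)`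
and `j_a = (1 - c⁺ c) j_a + c⁺ c j_a (1 - b b⁺)`; in this case
`a^{‖(b,c)} = (a + j_a)^{‖(b,c)} = 1^{‖(b,c)}`. -/
theorem stmt12 {R : Type*} [Ring R] (a b c bp cp ja : R)
    (hja : ja ∈ Ideal.jacobson (⊥ : Ideal R))
    (hbp : b * bp * b = b ∧ bp * b * bp = bp)
    (hcp : c * cp * c = c ∧ cp * c * cp = cp) :
    ((∃ y, IsBCInverse a b c y ∧ IsIdempotentElem y ∧
        ∃ z, IsBCInverse (a + ja) b c z ∧ IsIdempotentElem z) ↔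
      ((∃ e, IsBCInverse 1 b c e) ∧
       a = cp * c * b * bp + (1 - cp * c) * a + cp * c * a * (1 - b * bp) ∧
       ja = (1 - cp * c) * ja + cp * c * ja * (1 - b * bp))) ∧
    (((∃ e, IsBCInverse 1 b c e) ∧
       a = cp * c * b * bp + (1 - cp * c) * a + cp * c * a * (1 - b * bp) ∧
       ja = (1 - cp * c) * ja + cp * c * ja * (1 - b * bp)) →
      ∀ y z e, IsBCInverse a b c y → IsBCInverse (a + ja) b c z →
        IsBCInverse 1 b c e → y = e ∧ z = e) := by
  have haj_of : (a = cp * c * b * bp + (1 - cp * c) * a + cp * c * a * (1 - b * bp)) →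
      (ja = (1 - cp * c) * ja + cp * c * ja * (1 - b * bp)) →
      a + ja = cp * c * b * bp + (1 - cp * c) * (a + ja)
        + cp * c * (a + ja) * (1 - b * bp) := by
    intro ha hj
    conv_lhs => rw [ha, hj]
    noncomm_ring
  constructor
  · constructor
    · rintro ⟨y, hy, hyi, z, hz, hzi⟩
      have hy1 : IsBCInverse 1 b c y := bc_one_of_idem hy hyi
      have hz1 : IsBCInverse 1 b c z := bc_one_of_idem hz hzi
      have hzy : z = y := bc_unique hz1 hy1
      obtain ⟨hcay, hyab, _, _⟩ := hy
      have hyb : y * b = b := by have := hy1.2.1; rwa [mul_one] at this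
      have h1 : c * a * b = c * b := by
        conv_lhs => rw [← hyb]
        rw [← mul_assoc, hcay]
      have h1' : c * (a + ja) * b = c * b := by
        have hcz : c * (a + ja) * y = c := by rw [← hzy]; exact hz.1
        conv_lhs => rw [← hyb]
        rw [← mul_assoc, hcz]
      have hj0 : c * ja * b = 0 := by
        have hsum : c * a * b + c * ja * b = c * b := by
          calc c * a * b + c * ja * b = c * (a + ja) * b := by noncomm_ring
            _ = c * b := h1'
        rw [h1] at hsum
        exact (add_eq_left).mp hsum
      refine ⟨⟨y, hy1⟩, ?_, ?_⟩
      · have e1 : cp * (c * a * b) * bp = cp * (c * b) * bp := by rw [h1]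
        have expand : cp * c * b * bp + (1 - cp * c) * a + cp * c * a * (1 - b * bp)
            = a + (cp * (c * b) * bp - cp * (c * a * b) * bp) := by noncomm_ring
        rw [expand, e1, sub_self, add_zero]
      · have key : cp * (c * ja * b) * bp = 0 := by rw [hj0, mul_zero, zero_mul]
        have expand : (1 - cp * c) * ja + cp * c * ja * (1 - b * bp)
            = ja - cp * (c * ja * b) * bp := by noncomm_ring
        rw [expand, key, sub_zero]
    · rintro ⟨⟨e, he⟩, ha, hj⟩
      have hea : IsBCInverse a b c e := bc_of_one hbp.1 hcp.1 he ha
      have heaj : IsBCInverse (a + ja) b c e :=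
        bc_of_one hbp.1 hcp.1 he (haj_of ha hj)
      have hei : IsIdempotentElem e := by
        have := bc_refl he
        rwa [mul_one] at this
      exact ⟨e, hea, hei, e, heaj, hei⟩
  · rintro ⟨⟨e0, he0⟩, ha, hj⟩ y z e hy hz he
    have hea : IsBCInverse a b c e := bc_of_one hbp.1 hcp.1 he ha
    have heaj : IsBCInverse (a + ja) b c e :=
      bc_of_one hbp.1 hcp.1 he (haj_of ha hj)
    exact ⟨bc_unique hy hea, bc_unique hz heaj⟩
end
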